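/- arXiv:1110.2388 — 12 statements merged into one kernel-verified Lean document; each statement's English description precedes it below -/
import Mathlib

section
/- The following are equivalent: (a) there exist measurable functions f i : Fin (k i) → ([0,1] → Fin (m i)), one for each i ∈ Fin n, such that for every treatment φ ∈ T the pushforward of the uniform probability measure on the unit interval [0,1] (Lebesgue measure restricted to [0,1]) under the map u ↦ (fun i => f i (φ i) u) : [0,1] → Π i, Fin (m i) equals μ φ; (b) there exists a JDC-measure for the family (μ φ)_{φ ∈ T}. (This combines the Joint Distribution Criterion for selective influences with the statement that the hidden random entity R of the definition of selective influences can always be chosen to be a random variable uniformly distributed on [0,1].) -/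
/-!
A measure on `Π i, Fin (k i) → Fin (m i)` is the joint law of all the random outputs `L i (φ i)`
at once, so a uniform representation `u ↦ (f i j u)` pushes the uniform measure forward to a
JDC-measure. Conversely, a JDC-measure lives on a finite space, and every probability measure on
a finite space is the image of the uniform measure on `[0,1]` under a quantile function: after
ordering the points, send `u` to the least point whose cumulative mass is at least `u`.
-/

open MeasureTheory Set

instance isProbabilityMeasure_volume_restrict_Icc_zero_one :
    IsProbabilityMeasure (volume.restrict (Icc (0 : ℝ) 1)) :=
  ⟨by simp⟩

lemma volume_restrict_Icc_zero_one_Iic {c : ℝ} (h₁ : c ≤ 1) :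
    volume.restrict (Icc (0 : ℝ) 1) (Iic c) = ENNReal.ofReal c := by
  have hc : Iic c ∩ Icc 0 1 = Icc 0 c := by
    ext u
    simp only [mem_inter_iff, mem_Iic, mem_Icc]
    constructor
    · rintro ⟨huc, hu₀, -⟩
      exact ⟨hu₀, huc⟩
    · rintro ⟨hu₀, huc⟩
      exact ⟨huc, hu₀, huc.trans h₁⟩
  rw [Measure.restrict_apply measurableSet_Iic, hc, Real.volume_Icc, sub_zero]

section Quantile

variable {α : Type*} [CompleteLinearOrder α]

/-- The generalized inverse of `F`; since `sInf ∅ = ⊤`, values of `u` above the range of `F`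
go to `⊤`. -/
def quantile (F : α → ℝ) (u : ℝ) : α :=
  sInf {a | u ≤ F a}

lemma monotone_quantile (F : α → ℝ) : Monotone (quantile F) :=
  fun _ _ huv => sInf_le_sInf fun _ ha => huv.trans ha

lemma quantile_le_iff [Finite α] {F : α → ℝ} (hF : Monotone F) {u : ℝ} {a : α} (ha : a ≠ ⊤) :
    quantile F u ≤ a ↔ u ≤ F a := by
  refine ⟨fun h => ?_, fun h => sInf_le h⟩
  obtain hS | hS := {b | u ≤ F b}.eq_empty_or_nonempty
  · rw [quantile, hS, sInf_empty, top_le_iff] at h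
    exact absurd h ha
  · exact (hS.csInf_mem (toFinite _)).trans (hF h)

variable [Finite α] [TopologicalSpace α] [OrderTopology α] [MeasurableSpace α] [BorelSpace α]

theorem map_quantile_volume_restrict_Icc (ξ : Measure α) [IsProbabilityMeasure ξ] :
    (volume.restrict (Icc (0 : ℝ) 1)).map (quantile fun a => (ξ (Iic a)).toReal) = ξ := by
  set F : α → ℝ := fun a => (ξ (Iic a)).toReal
  have hF : Monotone F := fun a b hab =>
    ENNReal.toReal_mono (measure_ne_top ξ _) (measure_mono (Iic_subset_Iic.2 hab))
  have hq : Measurable (quantile F) := (monotone_quantile F).measurable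
  refine (Measure.ext_of_Iic ξ _ fun a => ?_).symm
  rw [Measure.map_apply hq measurableSet_Iic]
  by_cases ha : a = ⊤
  · simp [ha]
  have hpre : quantile F ⁻¹' Iic a = Iic (F a) := by
    ext u
    exact quantile_le_iff hF ha
  rw [hpre, volume_restrict_Icc_zero_one_Iic
      (ENNReal.toReal_le_of_le_ofReal zero_le_one (by simpa using prob_le_one)),
    ENNReal.ofReal_toReal (measure_ne_top ξ _)]

end Quantile

theorem exists_measurable_map_volume_restrict_Icc_eq {β : Type*} [Finite β] [MeasurableSpace β]
    [MeasurableSingletonClass β] (ξ : Measure β) [IsProbabilityMeasure ξ] :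
    ∃ g : ℝ → β, Measurable g ∧ (volume.restrict (Icc (0 : ℝ) 1)).map g = ξ := by
  have : Nonempty β := nonempty_of_isProbabilityMeasure ξ
  obtain ⟨N, hN⟩ := Nat.exists_eq_succ_of_ne_zero (Nat.card_pos (α := β)).ne'
  let e : β ≃ Fin (N + 1) := (Finite.equivFin β).trans (finCongr hN)
  have he : Measurable e := measurable_of_countable _
  have he' : Measurable e.symm := measurable_of_countable _
  have : IsProbabilityMeasure (ξ.map e) := Measure.isProbabilityMeasure_map he.aemeasurable
  set q := quantile fun a => (ξ.map e (Iic a)).toReal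
  have hq : Measurable q := (monotone_quantile _).measurable
  refine ⟨e.symm ∘ q, he'.comp hq, ?_⟩
  rw [← Measure.map_map he' hq, map_quantile_volume_restrict_Icc, Measure.map_map he' he]
  simp

theorem jdc_iff_uniform_representation_general
    (n : ℕ) (k m : Fin n → ℕ)
    (T : Set (∀ i, Fin (k i)))
    (μ : (∀ i, Fin (k i)) → Measure (∀ i, Fin (m i))) :
    (∃ f : ∀ i, Fin (k i) → ℝ → Fin (m i),
      (∀ i j, Measurable (f i j)) ∧
      ∀ φ ∈ T,
        Measure.map (fun u => fun i => f i (φ i) u)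
          (volume.restrict (Set.Icc (0 : ℝ) 1)) = μ φ) ↔
    (∃ ξ : Measure (∀ i, Fin (k i) → Fin (m i)),
      IsProbabilityMeasure ξ ∧
      ∀ φ ∈ T, Measure.map (fun L => fun i => L i (φ i)) ξ = μ φ) := by
  have heval (φ : ∀ i, Fin (k i)) :
      Measurable fun L : ∀ i, Fin (k i) → Fin (m i) => fun i => L i (φ i) :=
    measurable_of_countable _
  constructor
  · rintro ⟨f, hf, hfT⟩
    have hjoint : Measurable fun u i j => f i j u := by
      simp only [measurable_pi_iff]
      exact hf
    refine ⟨(volume.restrict (Icc (0 : ℝ) 1)).map fun u i j => f i j u,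
      Measure.isProbabilityMeasure_map hjoint.aemeasurable, fun φ hφ => ?_⟩
    rw [Measure.map_map (heval φ) hjoint]
    exact hfT φ hφ
  · rintro ⟨ξ, hξ, hξT⟩
    obtain ⟨g, hg, hgξ⟩ := exists_measurable_map_volume_restrict_Icc_eq ξ
    refine ⟨fun i j u => g u i j, fun i j => by fun_prop, fun φ hφ => ?_⟩
    rw [← hξT φ hφ, ← hgξ, Measure.map_map (heval φ) hg]
    rfl

/-- Joint Distribution Criterion combined with the fact that the hidden variable `R`
can be chosen uniformly distributed on `[0,1]`: selective influences (representation
of all `μ φ`, `φ ∈ T`, as distributions of `(f i (φ i) R)_i` for a uniform `R` on `[0,1]`)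
hold iff a JDC-measure exists. -/
theorem jdc_iff_uniform_representation
    (n : ℕ) (hn : 1 ≤ n) (k m : Fin n → ℕ)
    (hk : ∀ i, 1 ≤ k i) (hm : ∀ i, 1 ≤ m i)
    (T : Set (∀ i, Fin (k i))) (hT : T.Nonempty)
    (μ : (∀ i, Fin (k i)) → Measure (∀ i, Fin (m i)))
    (hμ : ∀ φ ∈ T, IsProbabilityMeasure (μ φ)) :
    (∃ f : ∀ i, Fin (k i) → ℝ → Fin (m i),
      (∀ i j, Measurable (f i j)) ∧
      ∀ φ ∈ T,
        Measure.map (fun u => fun i => f i (φ i) u)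
          (volume.restrict (Set.Icc (0 : ℝ) 1)) = μ φ) ↔
    (∃ ξ : Measure (∀ i, Fin (k i) → Fin (m i)),
      IsProbabilityMeasure ξ ∧
      ∀ φ ∈ T, Measure.map (fun L => fun i => L i (φ i)) ξ = μ φ) :=
  jdc_iff_uniform_representation_general n k m T μ
end

section
/- (Complete marginal selectivity.) Suppose a JDC-measure for the family (μ φ)_{φ ∈ T} exists. Then for every subset S ⊆ Fin n and all treatments φ, φ′ ∈ T with φ i = φ′ i for every i ∈ S, the pushforwards of μ φ and of μ φ′ under the restriction map a ↦ (fun i : S => a i) : (Π i, Fin (m i)) → (Π i : S, Fin (m i)) coincide. In particular, the marginal distribution of the i-th coordinate under μ φ depends only on the factor point φ i. -/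
open MeasureTheory

theorem map_restrict_map_eval_congr {ι : Type*} {α β : ι → Type*} [∀ i, MeasurableSpace (β i)]
    (ξ : Measure (∀ i, α i → β i)) (S : Set ι) {φ φ' : ∀ i, α i} (h : ∀ i ∈ S, φ i = φ' i) :
    (ξ.map fun L i => L i (φ i)).map (fun a (i : S) => a i.1) =
      (ξ.map fun L i => L i (φ' i)).map (fun a (i : S) => a i.1) := by
  rw [Measure.map_map (by fun_prop) (by fun_prop), Measure.map_map (by fun_prop) (by fun_prop)]
  congr 1
  funext L i
  exact congrArg (L i) (h i i.2)

theorem marginal_selectivity_of_jdc_general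
    (n : ℕ) (k m : Fin n → ℕ)
    (T : Set (∀ i, Fin (k i)))
    (μ : (∀ i, Fin (k i)) → Measure (∀ i, Fin (m i)))
    (hJDC : ∃ ξ : Measure (∀ i, Fin (k i) → Fin (m i)),
      IsProbabilityMeasure ξ ∧
      ∀ φ ∈ T, Measure.map (fun L => fun i => L i (φ i)) ξ = μ φ) :
    ∀ S : Set (Fin n), ∀ φ ∈ T, ∀ φ' ∈ T, (∀ i ∈ S, φ i = φ' i) →
      Measure.map (fun (a : ∀ i, Fin (m i)) => fun i : S => a i.1) (μ φ) =
      Measure.map (fun (a : ∀ i, Fin (m i)) => fun i : S => a i.1) (μ φ') := by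
  obtain ⟨ξ, -, hξ⟩ := hJDC
  intro S φ hφ φ' hφ' hagree
  rw [← hξ φ hφ, ← hξ φ' hφ']
  exact map_restrict_map_eval_congr ξ S hagree

/-- Complete marginal selectivity: if a JDC-measure exists, then for any subset `S` of the
indices, the joint marginal distribution of the coordinates in `S` depends only on the
factor points of the factors indexed by `S`. -/
theorem marginal_selectivity_of_jdc
    (n : ℕ) (hn : 1 ≤ n) (k m : Fin n → ℕ)
    (hk : ∀ i, 1 ≤ k i) (hm : ∀ i, 1 ≤ m i)
    (T : Set (∀ i, Fin (k i))) (hT : T.Nonempty)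
    (μ : (∀ i, Fin (k i)) → Measure (∀ i, Fin (m i)))
    (hμ : ∀ φ ∈ T, IsProbabilityMeasure (μ φ))
    (hJDC : ∃ ξ : Measure (∀ i, Fin (k i) → Fin (m i)),
      IsProbabilityMeasure ξ ∧
      ∀ φ ∈ T, Measure.map (fun L => fun i => L i (φ i)) ξ = μ φ) :
    ∀ S : Set (Fin n), ∀ φ ∈ T, ∀ φ' ∈ T, (∀ i ∈ S, φ i = φ' i) →
      Measure.map (fun (a : ∀ i, Fin (m i)) => fun i : S => a i.1) (μ φ) =
      Measure.map (fun (a : ∀ i, Fin (m i)) => fun i : S => a i.1) (μ φ') :=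
  marginal_selectivity_of_jdc_general n k m T μ hJDC
end

section
/- (Invariance under factor-point-specific transformations.) Let m′ : Fin n → ℕ with m′ i ≥ 1, and for each i let F i : Fin (k i) → Fin (m i) → Fin (m′ i) be an arbitrary family of functions (a transformation of the values of the i-th output that may depend on the point of the i-th factor). For each φ ∈ T define ν φ as the pushforward of μ φ under the map a ↦ (fun i => F i (φ i) (a i)). If the family (μ φ)_{φ ∈ T} has a JDC-measure, then the transformed family (ν φ)_{φ ∈ T} has a JDC-measure (with values Fin (m′ i)). -/
/-! Transport a JDC-measure `ξ` along the post-composition `L ↦ (a ↦ F i a (L i a))_i`: evaluating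
the transformed response functions at `φ` is the same as transforming the evaluation of `L` at `φ`
by `F i (φ i)`, so the marginals of the transported measure are exactly the `ν φ`. -/

open MeasureTheory

section JDC

variable {ι : Type*} {α β γ : ι → Type*} [∀ i, MeasurableSpace (β i)]
  [∀ i, MeasurableSpace (γ i)]

def IsJDCMeasure (T : Set (∀ i, α i)) (μ : (∀ i, α i) → Measure (∀ i, β i))
    (ξ : Measure (∀ i, α i → β i)) : Prop :=
  IsProbabilityMeasure ξ ∧ ∀ φ ∈ T, ξ.map (fun L i => L i (φ i)) = μ φ

theorem measurable_pi_eval_apply (φ : ∀ i, α i) :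
    Measurable fun (L : ∀ i, α i → β i) i => L i (φ i) :=
  measurable_pi_lambda _ fun i => measurable_pi_apply (φ i) |>.comp (measurable_pi_apply i)

variable {G : ∀ i, α i → β i → γ i}

theorem measurable_pi_postcomp (hG : ∀ i a, Measurable (G i a)) :
    Measurable fun (L : ∀ i, α i → β i) i a => G i a (L i a) :=
  measurable_pi_lambda _ fun i => measurable_pi_lambda _ fun a =>
    (hG i a).comp <| measurable_pi_apply a |>.comp (measurable_pi_apply i)

theorem measurable_pi_map_at (hG : ∀ i a, Measurable (G i a)) (φ : ∀ i, α i) :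
    Measurable fun (b : ∀ i, β i) i => G i (φ i) (b i) :=
  measurable_pi_lambda _ fun i => (hG i (φ i)).comp (measurable_pi_apply i)

theorem map_eval_map_postcomp (hG : ∀ i a, Measurable (G i a))
    (ξ : Measure (∀ i, α i → β i)) (φ : ∀ i, α i) :
    (ξ.map fun L i a => G i a (L i a)).map (fun L i => L i (φ i)) =
      (ξ.map fun L i => L i (φ i)).map fun b i => G i (φ i) (b i) := by
  rw [Measure.map_map (measurable_pi_eval_apply φ) (measurable_pi_postcomp hG),
    Measure.map_map (measurable_pi_map_at hG φ) (measurable_pi_eval_apply φ)]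
  rfl

theorem IsJDCMeasure.map_postcomp {T : Set (∀ i, α i)} {μ : (∀ i, α i) → Measure (∀ i, β i)}
    {ξ : Measure (∀ i, α i → β i)} (hξ : IsJDCMeasure T μ ξ) (hG : ∀ i a, Measurable (G i a)) :
    IsJDCMeasure T (fun φ => (μ φ).map fun b i => G i (φ i) (b i))
      (ξ.map fun L i a => G i a (L i a)) := by
  obtain ⟨hprob, hmarg⟩ := hξ
  refine ⟨Measure.isProbabilityMeasure_map (measurable_pi_postcomp hG).aemeasurable,
    fun φ hφ => ?_⟩
  rw [map_eval_map_postcomp hG, hmarg φ hφ]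

end JDC

theorem jdc_invariant_under_factor_point_specific_transformations_general
    (n : ℕ) (k m : Fin n → ℕ)
    (T : Set (∀ i, Fin (k i)))
    (μ : (∀ i, Fin (k i)) → Measure (∀ i, Fin (m i)))
    (m' : Fin n → ℕ)
    (F : ∀ i, Fin (k i) → Fin (m i) → Fin (m' i))
    (ν : (∀ i, Fin (k i)) → Measure (∀ i, Fin (m' i)))
    (hν : ∀ φ ∈ T,
      ν φ = Measure.map (fun (a : ∀ i, Fin (m i)) => fun i => F i (φ i) (a i)) (μ φ))
    (hJDC : ∃ ξ : Measure (∀ i, Fin (k i) → Fin (m i)),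
      IsProbabilityMeasure ξ ∧
      ∀ φ ∈ T, Measure.map (fun L => fun i => L i (φ i)) ξ = μ φ) :
    ∃ ξ' : Measure (∀ i, Fin (k i) → Fin (m' i)),
      IsProbabilityMeasure ξ' ∧
      ∀ φ ∈ T, Measure.map (fun L => fun i => L i (φ i)) ξ' = ν φ := by
  obtain ⟨ξ, hξ⟩ := hJDC
  obtain ⟨hprob, hmarg⟩ :=
    IsJDCMeasure.map_postcomp (G := F) hξ fun _ _ => .of_discrete
  exact ⟨_, hprob, fun φ hφ => (hmarg φ hφ).trans (hν φ hφ).symm⟩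

/-- Invariance under factor-point-specific transformations: if the family `(μ φ)_{φ ∈ T}`
has a JDC-measure, then so does the family obtained by transforming the `i`-th output by
an arbitrary function that may depend on the point of the `i`-th factor. -/
theorem jdc_invariant_under_factor_point_specific_transformations
    (n : ℕ) (hn : 1 ≤ n) (k m : Fin n → ℕ)
    (hk : ∀ i, 1 ≤ k i) (hm : ∀ i, 1 ≤ m i)
    (T : Set (∀ i, Fin (k i))) (hT : T.Nonempty)
    (μ : (∀ i, Fin (k i)) → Measure (∀ i, Fin (m i)))
    (hμ : ∀ φ ∈ T, IsProbabilityMeasure (μ φ))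
    (m' : Fin n → ℕ) (hm' : ∀ i, 1 ≤ m' i)
    (F : ∀ i, Fin (k i) → Fin (m i) → Fin (m' i))
    (ν : (∀ i, Fin (k i)) → Measure (∀ i, Fin (m' i)))
    (hν : ∀ φ ∈ T,
      ν φ = Measure.map (fun (a : ∀ i, Fin (m i)) => fun i => F i (φ i) (a i)) (μ φ))
    (hJDC : ∃ ξ : Measure (∀ i, Fin (k i) → Fin (m i)),
      IsProbabilityMeasure ξ ∧
      ∀ φ ∈ T, Measure.map (fun L => fun i => L i (φ i)) ξ = μ φ) :
    ∃ ξ' : Measure (∀ i, Fin (k i) → Fin (m' i)),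
      IsProbabilityMeasure ξ' ∧
      ∀ φ ∈ T, Measure.map (fun L => fun i => L i (φ i)) ξ' = ν φ :=
  jdc_invariant_under_factor_point_specific_transformations_general n k m T μ m' F ν hν hJDC
end

section
/- Let T = Π i, Fin (k i) be the complete set of treatments, and regard M as a real matrix with rows indexed by pairs (l, φ) ∈ (Π i, Fin (m i)) × (Π i, Fin (k i)) and columns indexed by L ∈ Π i, (Fin (k i) → Fin (m i)), with entry 1 if L i (φ i) = l i for all i and entry 0 otherwise. Then the rank of M equals ∏ i, (k i * (m i − 1) + 1). -/
/-!
The matrix is the Kronecker product, over `i`, of the matrices `A` with rows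
`(l, φ) ∈ Fin m × Fin k`, columns `f : Fin k → Fin m` and entries `[f φ = l]`, and it suffices
to show that such an `A` has rank `r = k * (m - 1) + 1` in a way that survives Kronecker
products: by a factorization `A = C * D` through a type of size `r` and an identity
`E * A * F = 1` of size `r`.

Fix a level `b₀`. Every column of `A` has exactly one `1` in each block `φ`, so the row `(b₀, φ)`
is the all-ones row minus the rows `(b, φ)` with `b ≠ b₀`; hence `D` can consist of these
`k * (m - 1) + 1` rows. Conversely, the column of the constant function `b₀` is the indicator
of `{b₀} × Fin k`, and subtracting it from the column of the function that is `b₀` except for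
the value `b` at `ψ` leaves `e (b, ψ) - e (b₀, ψ)`; these `r` vectors are read off by the rows
of `E`.
-/

namespace Matrix

section Rank

variable {R : Type*} [CommSemiring R] [StrongRankCondition R] {α β γ : Type*} [Fintype β]
  [Fintype γ]

theorem rank_le_card_of_eq_mul {A : Matrix α β R} (C : Matrix α γ R) (D : Matrix γ β R)
    (h : A = C * D) : A.rank ≤ Fintype.card γ :=
  h ▸ (rank_mul_le_left C D).trans C.rank_le_card_width

theorem card_le_rank_of_mul_mul_eq_one [Fintype α] [DecidableEq γ] {A : Matrix α β R}
    (E : Matrix γ α R) (F : Matrix β γ R) (h : E * A * F = 1) : Fintype.card γ ≤ A.rank :=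
  calc Fintype.card γ = (E * A * F).rank := by rw [h, rank_one]
    _ ≤ (E * A).rank := rank_mul_le_left _ _
    _ ≤ A.rank := rank_mul_le_right _ _

end Rank

section PiKronecker

variable {R : Type*} [CommSemiring R] {ι : Type*} [Fintype ι] {α β γ : ι → Type*}

def piKronecker (A : ∀ i, Matrix (α i) (β i) R) : Matrix (∀ i, α i) (∀ i, β i) R :=
  of fun a b => ∏ i, A i (a i) (b i)

@[simp]
theorem piKronecker_apply (A : ∀ i, Matrix (α i) (β i) R) (a : ∀ i, α i) (b : ∀ i, β i) :
    piKronecker A a b = ∏ i, A i (a i) (b i) :=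
  rfl

theorem piKronecker_mul [DecidableEq ι] [∀ i, Fintype (β i)] (A : ∀ i, Matrix (α i) (β i) R)
    (B : ∀ i, Matrix (β i) (γ i) R) :
    piKronecker A * piKronecker B = piKronecker fun i => A i * B i := by
  ext a c
  simp only [mul_apply, piKronecker_apply, ← Finset.prod_mul_distrib]
  rw [Finset.prod_univ_sum, Fintype.piFinset_univ]

theorem piKronecker_one [∀ i, DecidableEq (α i)] :
    piKronecker (fun i => (1 : Matrix (α i) (α i) R)) = 1 := by
  ext a b
  simp only [piKronecker_apply, one_apply, Fintype.prod_boole, funext_iff]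

end PiKronecker

end Matrix

section ElemFun

variable {K B : Type*} [DecidableEq K] (b₀ : B)

def elemFun : Option (K × {b // b ≠ b₀}) → K → B
  | none => fun _ => b₀
  | some s => Function.update (fun _ => b₀) s.1 s.2

theorem elemFun_apply_eq_iff (u : Option (K × {b // b ≠ b₀})) (φ : K) (b : {b // b ≠ b₀}) :
    elemFun b₀ u φ = b ↔ u = some (φ, b) := by
  rcases u with _ | ⟨ψ, c⟩
  · simpa [elemFun] using b.2.symm
  · by_cases h : φ = ψ
    · subst h
      simp [elemFun, Subtype.ext_iff, eq_comm]
    · simp [elemFun, h, b.2.symm, Ne.symm h]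

end ElemFun

section GraphMatrix

variable (R : Type*) [Ring R] (K B : Type*) [Fintype K] [Fintype B] [DecidableEq K]
  [DecidableEq B]

def graphMatrix : Matrix (B × K) (K → B) R :=
  Matrix.of fun p f => if f p.2 = p.1 then 1 else 0

variable {B} (b₀ : B)

def graphLeft : Matrix (B × K) (Option (K × {b // b ≠ b₀})) R :=
  Matrix.of fun p t => match t with
    | none => if p.1 = b₀ then 1 else 0
    | some s => if p.2 = s.1 then (if p.1 = s.2 then 1 else 0) - (if p.1 = b₀ then 1 else 0)
        else 0

def graphRight : Matrix (Option (K × {b // b ≠ b₀})) (K → B) R :=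
  Matrix.of fun t f => match t with
    | none => 1
    | some s => if f s.1 = s.2 then 1 else 0

def graphSelect : Matrix (K → B) (Option (K × {b // b ≠ b₀})) R :=
  Matrix.of fun f u =>
    (if f = elemFun b₀ u then 1 else 0) - (if u ≠ none ∧ f = elemFun b₀ none then 1 else 0)

def graphProbe (φ₀ : K) : Matrix (Option (K × {b // b ≠ b₀})) (B × K) R :=
  Matrix.of fun t p => match t with
    | none => if p.2 = φ₀ then 1 else 0
    | some s => if p = ((s.2 : B), s.1) then 1 else 0

variable {R K}

theorem graphMatrix_eq_mul : graphMatrix R K B = graphLeft R K b₀ * graphRight R K b₀ := by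
  ext ⟨l, φ⟩ f
  rw [Matrix.mul_apply, Fintype.sum_option, Fintype.sum_prod_type]
  simp only [graphMatrix, graphLeft, graphRight, Matrix.of_apply, mul_one, ite_mul, zero_mul,
    Finset.sum_ite_irrel, Finset.sum_const_zero, Finset.sum_ite_eq, Finset.mem_univ, if_true]
  -- the summand vanishes at `b₀`, so the sum may run over all of `B`
  have hsum := Fintype.sum_eq_add_sum_subtype_ne (fun b =>
    ((if l = b then (1 : R) else 0) - if l = b₀ then 1 else 0) * if f φ = b then 1 else 0) b₀
  rw [sub_self, zero_mul, zero_add] at hsum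
  rw [← hsum]
  simp [eq_comm]

theorem graphMatrix_mul_graphSelect_apply (p : B × K) (u : Option (K × {b // b ≠ b₀})) :
    (graphMatrix R K B * graphSelect R K b₀) p u =
      (if elemFun b₀ u p.2 = p.1 then 1 else 0) - (if u ≠ none ∧ b₀ = p.1 then 1 else 0) := by
  simp only [Matrix.mul_apply, graphMatrix, graphSelect, Matrix.of_apply, mul_sub, ite_and,
    mul_ite, mul_one, mul_zero, Finset.sum_sub_distrib, Finset.sum_ite_irrel, Finset.sum_ite_eq',
    Finset.mem_univ, if_true, Finset.sum_const_zero]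
  rfl

theorem graphProbe_mul_graphMatrix_mul_graphSelect (φ₀ : K) :
    graphProbe R K b₀ φ₀ * graphMatrix R K B * graphSelect R K b₀ = 1 := by
  rw [Matrix.mul_assoc]
  ext t u
  rw [Matrix.mul_apply]
  simp only [graphMatrix_mul_graphSelect_apply]
  cases t with
  | none =>
    rw [Fintype.sum_prod_type_right]
    simp only [graphProbe, Matrix.of_apply, ite_mul, one_mul, zero_mul, Finset.sum_ite_irrel,
      Finset.sum_const_zero, Finset.sum_ite_eq', Finset.mem_univ, if_true, Finset.sum_sub_distrib,
      ite_and, Finset.sum_ite_eq, Matrix.one_apply]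
    cases u <;> simp
  | some s =>
    simp only [graphProbe, Matrix.of_apply, ite_mul, one_mul, zero_mul, Finset.sum_ite_eq',
      Finset.mem_univ, if_true, elemFun_apply_eq_iff, s.2.2.symm, and_false, if_false, sub_zero,
      Matrix.one_apply]
    simp [eq_comm]

end GraphMatrix

theorem rank_LFT_matrix_general
    (n : ℕ) (k m : Fin n → ℕ)
    (hk : ∀ i, 1 ≤ k i) (hm : ∀ i, 1 ≤ m i) :
    (Matrix.of (fun (p : (∀ i, Fin (m i)) × (∀ i, Fin (k i)))
        (L : ∀ i, Fin (k i) → Fin (m i)) =>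
        if ∀ i, L i (p.2 i) = p.1 i then (1 : ℝ) else 0)).rank =
      ∏ i, (k i * (m i - 1) + 1) := by
  let b₀ : ∀ i, Fin (m i) := fun i => ⟨0, hm i⟩
  let φ₀ : ∀ i, Fin (k i) := fun i => ⟨0, hk i⟩
  let A := Matrix.piKronecker fun i => graphMatrix ℝ (Fin (k i)) (Fin (m i))
  have hM : Matrix.of (fun (p : (∀ i, Fin (m i)) × (∀ i, Fin (k i)))
      (L : ∀ i, Fin (k i) → Fin (m i)) => if ∀ i, L i (p.2 i) = p.1 i then (1 : ℝ) else 0) =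
      A.submatrix (Equiv.arrowProdEquivProdArrow _ _ _).symm (Equiv.refl _) := by
    ext p L
    simp [A, graphMatrix, Fintype.prod_boole]
  have hcard : Fintype.card (∀ i, Option (Fin (k i) × {b // b ≠ b₀ i})) =
      ∏ i, (k i * (m i - 1) + 1) := by
    simp [Fintype.card_pi]
  rw [hM, Matrix.rank_submatrix, ← hcard]
  refine le_antisymm
    (Matrix.rank_le_card_of_eq_mul (Matrix.piKronecker fun i => graphLeft ℝ _ (b₀ i))
      (Matrix.piKronecker fun i => graphRight ℝ _ (b₀ i)) ?_)
    (Matrix.card_le_rank_of_mul_mul_eq_one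
      (Matrix.piKronecker fun i => graphProbe ℝ _ (b₀ i) (φ₀ i))
      (Matrix.piKronecker fun i => graphSelect ℝ _ (b₀ i)) ?_)
  · simp only [A, Matrix.piKronecker_mul, ← graphMatrix_eq_mul]
  · simp only [A, Matrix.piKronecker_mul, graphProbe_mul_graphMatrix_mul_graphSelect,
      Matrix.piKronecker_one]

/-- The rank of the Boolean matrix `M` of the Linear Feasibility Test, for the complete
set of treatments, equals `∏ i, (k i * (m i − 1) + 1)`. -/
theorem rank_LFT_matrix
    (n : ℕ) (hn : 1 ≤ n) (k m : Fin n → ℕ)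
    (hk : ∀ i, 1 ≤ k i) (hm : ∀ i, 1 ≤ m i) :
    (Matrix.of (fun (p : (∀ i, Fin (m i)) × (∀ i, Fin (k i)))
        (L : ∀ i, Fin (k i) → Fin (m i)) =>
        if ∀ i, L i (p.2 i) = p.1 i then (1 : ℝ) else 0)).rank =
      ∏ i, (k i * (m i - 1) + 1) :=
  rank_LFT_matrix_general n k m hk hm
end

section
/- For every subset S ⊆ Fin n, every j ∈ Π i : S, Fin (k i), every l̄ ∈ Π i : S, Fin (m i), and every treatment φ ∈ Π i, Fin (k i) with φ i = j i for all i ∈ S, the sum over all l ∈ Π i, Fin (m i) with l i = l̄ i for all i ∈ S of the row of M indexed by (l, φ) equals the vector V (S, j, l̄). In particular, this sum of rows is the same for any two treatments that agree with j on S, regardless of their values outside S. -/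
theorem sum_rows_eq_V_general
    (n : ℕ) (k m : Fin n → ℕ)
    (S : Finset (Fin n)) (j : ∀ i : S, Fin (k i.1)) (lbar : ∀ i : S, Fin (m i.1))
    (φ : ∀ i, Fin (k i)) (hφ : ∀ i : S, φ i.1 = j i) :
    (fun (L : ∀ i, Fin (k i) → Fin (m i)) =>
        ∑ l ∈ Finset.univ.filter (fun l : ∀ i, Fin (m i) => ∀ i : S, l i.1 = lbar i),
          (if ∀ i, L i (φ i) = l i then (1 : ℝ) else 0)) =
      (fun (L : ∀ i, Fin (k i) → Fin (m i)) =>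
        if ∀ i : S, L i.1 (j i) = lbar i then (1 : ℝ) else 0) := by
  funext L
  -- Only the output profile `fun i => L i (φ i)` contributes to column `L`.
  simp only [← funext_iff, Finset.sum_ite_eq]
  simp only [Finset.mem_filter, Finset.mem_univ, true_and, hφ]

/-- For any subset `S` of the factors, any assignment `j` of factor points and `l̄` of
output values on `S`, and any treatment `φ` agreeing with `j` on `S`, the sum of the rows
of `M` indexed by `(l, φ)` with `l` agreeing with `l̄` on `S` equals the vector
`V (S, j, l̄)` (in particular it does not depend on the values of `φ` outside `S`). -/
theorem sum_rows_eq_V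
    (n : ℕ) (hn : 1 ≤ n) (k m : Fin n → ℕ)
    (hk : ∀ i, 1 ≤ k i) (hm : ∀ i, 1 ≤ m i)
    (S : Finset (Fin n)) (j : ∀ i : S, Fin (k i.1)) (lbar : ∀ i : S, Fin (m i.1))
    (φ : ∀ i, Fin (k i)) (hφ : ∀ i : S, φ i.1 = j i) :
    (fun (L : ∀ i, Fin (k i) → Fin (m i)) =>
        ∑ l ∈ Finset.univ.filter (fun l : ∀ i, Fin (m i) => ∀ i : S, l i.1 = lbar i),
          (if ∀ i, L i (φ i) = l i then (1 : ℝ) else 0)) =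
      (fun (L : ∀ i, Fin (k i) → Fin (m i)) =>
        if ∀ i : S, L i.1 (j i) = lbar i then (1 : ℝ) else 0) :=
  sum_rows_eq_V_general n k m S j lbar φ hφ
end

section
/- If the set of treatments T contains at least two elements, then the rows of M indexed by pairs (l, φ) with φ ∈ T are linearly dependent over ℝ; equivalently, the rank of the submatrix of M consisting of these rows is strictly smaller than the number of rows, |T| · ∏ i, m i. -/
/-! For each treatment `φ`, every column `L` has exactly one `1` among the rows `(l, φ)`, namely
at `l = fun i => L i (φ i)`; so the rows of each block `{(l, φ) | l}` sum to the all-ones vector.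
Two distinct treatments thus give two disjoint sets of rows with the same sum. -/

open Finset

theorem not_linearIndependent_of_sum_fiber_eq {α β R M : Type*} [Fintype α] [Nonempty α]
    [DecidableEq β] [Semiring R] [Nontrivial R] [AddCommMonoid M] [Module R M]
    {v : α × β → M} {b₁ b₂ : β} (hb : b₁ ≠ b₂)
    (hv : ∑ a, v (a, b₁) = ∑ a, v (a, b₂)) : ¬ LinearIndependent R v := by
  intro hli
  have fiber_sum (b : β) : ∑ p ∈ univ ×ˢ {b₁, b₂}, (if p.2 = b then (1 : R) else 0) • v p
      = if b = b₁ ∨ b = b₂ then ∑ a, v (a, b) else 0 := by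
    rw [sum_product, sum_comm, sum_pair hb]
    by_cases h₁ : b = b₁ <;> by_cases h₂ : b = b₂ <;> simp_all [eq_comm]
  obtain ⟨a⟩ := ‹Nonempty α›
  have := linearIndependent_iff'ₛ.1 hli _ (fun p => if p.2 = b₁ then 1 else 0)
    (fun p => if p.2 = b₂ then 1 else 0) (by rw [fiber_sum, fiber_sum]; simpa using hv)
    (a, b₁) (by simp)
  simp [hb] at this

theorem sum_ite_forall_eq_eq_one {ι R : Type*} [Fintype ι] [DecidableEq ι] {β : ι → Type*}
    [∀ i, Fintype (β i)] [AddCommMonoidWithOne R] (x : ∀ i, β i) [DecidablePred fun l : ∀ i, β i => ∀ i, x i = l i] :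
    ∑ l : ∀ i, β i, (if ∀ i, x i = l i then (1 : R) else 0) = 1 := by
  classical
  simp [← funext_iff]

theorem rows_of_M_linearly_dependent_general
    (n : ℕ) (k m : Fin n → ℕ)
    (hm : ∀ i, 1 ≤ m i)
    (T : Set (∀ i, Fin (k i)))
    (hT2 : ∃ φ₁ ∈ T, ∃ φ₂ ∈ T, φ₁ ≠ φ₂) :
    ¬ LinearIndependent ℝ
      (fun (p : (∀ i, Fin (m i)) × T) =>
        (fun (L : ∀ i, Fin (k i) → Fin (m i)) =>
          if ∀ i, L i ((p.2 : ∀ i, Fin (k i)) i) = p.1 i then (1 : ℝ) else 0)) := by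
  obtain ⟨φ₁, h₁, φ₂, h₂, hne⟩ := hT2
  have : Nonempty (∀ i, Fin (m i)) := ⟨fun i => ⟨0, hm i⟩⟩
  refine not_linearIndependent_of_sum_fiber_eq (b₁ := ⟨φ₁, h₁⟩) (b₂ := ⟨φ₂, h₂⟩)
    (by simpa using hne) ?_
  funext L
  simp only [Finset.sum_apply]
  exact (sum_ite_forall_eq_eq_one fun i => L i (φ₁ i)).trans
    (sum_ite_forall_eq_eq_one fun i => L i (φ₂ i)).symm

/-- If the set of treatments `T` contains at least two elements, then the rows of `M`
indexed by pairs `(l, φ)` with `φ ∈ T` are linearly dependent over `ℝ`. -/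
theorem rows_of_M_linearly_dependent
    (n : ℕ) (hn : 1 ≤ n) (k m : Fin n → ℕ)
    (hk : ∀ i, 1 ≤ k i) (hm : ∀ i, 1 ≤ m i)
    (T : Set (∀ i, Fin (k i))) (hT : T.Nonempty)
    (hT2 : ∃ φ₁ ∈ T, ∃ φ₂ ∈ T, φ₁ ≠ φ₂) :
    ¬ LinearIndependent ℝ
      (fun (p : (∀ i, Fin (m i)) × T) =>
        (fun (L : ∀ i, Fin (k i) → Fin (m i)) =>
          if ∀ i, L i ((p.2 : ∀ i, Fin (k i)) i) = p.1 i then (1 : ℝ) else 0)) :=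
  rows_of_M_linearly_dependent_general n k m hm T hT2
end

section
/- The family of vectors V (S, j, l), indexed by all triples (S, j, l) with S ⊆ Fin n, j ∈ Π i : S, Fin (k i), and l ∈ Π i : S, Fin (m i) satisfying l i ≠ 0 for every i ∈ S (i.e., l avoids a fixed base value of each variable), is linearly independent in the vector space ℝ^(Π i, (Fin (k i) → Fin (m i))). (These vectors form the rows of the full-row-rank matrix M*.) -/
/-! Evaluate at the assignment `w(S, j, l)` that sends `j i ↦ l i` for `i ∈ S` and everything
else to `0`. Since every `l i` avoids `0`, a vector `V(S', j', l')` is nonzero at `w(S, j, l)`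
only if `(S', j', l')` is a restriction of `(S, j, l)`; so the evaluation matrix is unitriangular
for the order of strict inclusion of the domains `S`, which is well founded. -/

open Module

section Triangular

variable {ι R M : Type*} [Ring R] [AddCommGroup M] [Module R M]

theorem LinearIndependent.of_dual_triangular {r : ι → ι → Prop} (hr : WellFounded r)
    (v : ι → M) (f : ι → Dual R M) (hdiag : ∀ i, IsUnit (f i (v i)))
    (htri : ∀ i j, j ≠ i → f i (v j) ≠ 0 → r j i) :
    LinearIndependent R v := by
  refine linearIndependent_iff'.mpr fun s g hrel i ↦ ?_
  induction i using hr.induction with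
  | _ i ih =>
    intro hi
    have hlower (j : ι) (hjs : j ∈ s) (hji : j ≠ i) : g j * f i (v j) = 0 := by
      by_cases hij : f i (v j) = 0
      · rw [hij, mul_zero]
      · rw [ih j (htri i j hji hij) hjs, zero_mul]
    have hsum : ∑ j ∈ s, g j * f i (v j) = 0 := by simpa using congr_arg (f i) hrel
    rw [s.sum_eq_single_of_mem i hi hlower] at hsum
    exact (hdiag i).mul_left_eq_zero.mp hsum

end Triangular

section Constraint

variable {ι : Type*} (A : ι → Type*) {B : ι → Type*} (b : ∀ i, B i)

/-- `⟨S, j, l⟩` stands for the constraints `L i (j i) = l i` for `i ∈ S`, on maps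
`L : ∀ i, A i → B i`. -/
abbrev Constraint : Type _ :=
  Σ S : Finset ι, (∀ i : S, A i) × (∀ i : S, {v : B i // v ≠ b i})

variable {A b}

namespace Constraint

def Holds (t : Constraint A b) (L : ∀ i, A i → B i) : Prop :=
  ∀ i : t.1, L i.1 (t.2.1 i) = (t.2.2 i).1

def witness [DecidableEq ι] [∀ i, DecidableEq (A i)] (t : Constraint A b) :
    ∀ i, A i → B i :=
  fun i a ↦ if h : i ∈ t.1 then (if t.2.1 ⟨i, h⟩ = a then (t.2.2 ⟨i, h⟩).1 else b i) else b i

variable [DecidableEq ι] [∀ i, DecidableEq (A i)]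

theorem holds_witness (t : Constraint A b) : t.Holds t.witness := by
  intro i
  simp [witness]

theorem exists_of_witness_ne {t : Constraint A b} {i : ι} {a : A i} (h : t.witness i a ≠ b i) :
    ∃ hi : i ∈ t.1, t.2.1 ⟨i, hi⟩ = a ∧ (t.2.2 ⟨i, hi⟩).1 = t.witness i a := by
  unfold witness at h ⊢
  split_ifs at h ⊢ with hi ha
  · exact ⟨hi, ha, rfl⟩
  all_goals exact absurd rfl h

theorem fst_ssubset_of_holds_witness {s t : Constraint A b} (h : s.Holds t.witness)
    (hne : s ≠ t) : s.1 ⊂ t.1 := by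
  have hrestrict (i : s.1) :
      ∃ hi : i.1 ∈ t.1, t.2.1 ⟨i, hi⟩ = s.2.1 i ∧ (t.2.2 ⟨i, hi⟩).1 = (s.2.2 i).1 := by
    rw [← h i]
    exact exists_of_witness_ne (h i ▸ (s.2.2 i).2)
  have hsub : s.1 ⊆ t.1 := fun i hi ↦ (hrestrict ⟨i, hi⟩).1
  refine hsub.ssubset_of_ne fun hst ↦ hne ?_
  obtain ⟨S, j, l⟩ := s
  obtain ⟨T, j', l'⟩ := t
  obtain rfl : S = T := hst
  have hj : j = j' := funext fun i ↦ (hrestrict i).2.1.symm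
  have hl : l = l' := funext fun i ↦ Subtype.ext (hrestrict i).2.2.symm
  rw [hj, hl]

end Constraint

theorem linearIndependent_constraint_indicator (R : Type*) [Ring R] [∀ i, DecidableEq (B i)] :
    LinearIndependent R (fun (t : Constraint A b) (L : ∀ i, A i → B i) ↦
      if ∀ i : t.1, L i.1 (t.2.1 i) = (t.2.2 i).1 then (1 : R) else 0) := by
  classical
  refine .of_dual_triangular (r := fun s t ↦ s.1 ⊂ t.1)
    (InvImage.wf _ Finset.isWellFounded_ssubset.wf) _ (fun t ↦ LinearMap.proj t.witness)
    (fun t ↦ ?_) (fun t s hne hs ↦ ?_)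
  · rw [LinearMap.proj_apply, if_pos]
    exacts [isUnit_one, t.holds_witness]
  · refine Constraint.fst_ssubset_of_holds_witness (by_contra fun h ↦ hs ?_) hne
    exact if_neg h

end Constraint

theorem V_family_linearly_independent_general
    (n : ℕ) (k m : Fin n → ℕ) [∀ i, NeZero (m i)] :
    LinearIndependent ℝ
      (fun (t : Σ S : Finset (Fin n),
          (∀ i : S, Fin (k i.1)) × (∀ i : S, {v : Fin (m i.1) // v ≠ 0})) =>
        (fun (L : ∀ i, Fin (k i) → Fin (m i)) =>
          if ∀ i : t.1, L i.1 (t.2.1 i) = (t.2.2 i).1 then (1 : ℝ) else 0)) :=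
  linearIndependent_constraint_indicator (A := fun i ↦ Fin (k i))
    (B := fun i ↦ Fin (m i)) (b := fun i ↦ 0) ℝ

/-- The family of vectors `V (S, j, l)`, over all subsets `S` of the factors, assignments
`j` of factor points on `S`, and assignments `l` of nonzero output values on `S`, is
linearly independent (these are the rows of the full-row-rank matrix `M*`). -/
theorem V_family_linearly_independent
    (n : ℕ) (hn : 1 ≤ n) (k m : Fin n → ℕ)
    (hk : ∀ i, 1 ≤ k i) [∀ i, NeZero (m i)] :
    LinearIndependent ℝ
      (fun (t : Σ S : Finset (Fin n),
          (∀ i : S, Fin (k i.1)) × (∀ i : S, {v : Fin (m i.1) // v ≠ 0})) =>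
        (fun (L : ∀ i, Fin (k i) → Fin (m i)) =>
          if ∀ i : t.1, L i.1 (t.2.1 i) = (t.2.2 i).1 then (1 : ℝ) else 0)) :=
  V_family_linearly_independent_general n k m
end

section
/- Every row of M (with rows ranging over all pairs (l, φ) ∈ (Π i, Fin (m i)) × (Π i, Fin (k i)), i.e., the complete design) lies in the ℝ-linear span of the set of vectors V (S, j, l) taken over all S ⊆ Fin n, j ∈ Π i : S, Fin (k i), and l ∈ Π i : S, Fin (m i) with l i ≠ 0 for every i ∈ S. Consequently, the rank of M is at most ∏ i, (k i * (m i − 1) + 1). -/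
/-!
Summing the indicator of `{x | ∀ i ∈ T, e i x = b i}` over all values of `b a`, for a fixed
`a ∈ T`, gives the indicator for `T.erase a`. So if `b a = 0`, the indicator for `(T, b)` is the one
for `(T.erase a, b)` minus those for `(T, update b a v)` with `v ≠ 0`, all of which have fewer zero
coordinates on `T`. By induction on that number, every such indicator lies in the span of the ones
with `b` nonzero on `T`. With `e i L = L i (j i)` these indicators are the vectors `V (S, j, l)`,
and the rows of `M` are the case `T = univ`. The nonzero generators are indexed by a set of size
`∏ i, (k i * (m i - 1) + 1)`, which bounds the rank.
-/

open Finset Function Submodule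

section CylIndicator

variable {ι X R : Type*} {β : ι → Type*} [Ring R] [DecidableEq ι] (e : ∀ i, X → β i)

open Classical in
noncomputable def cylIndicator (T : Finset ι) (b : ∀ i, β i) : X → R :=
  fun x => if ∀ i ∈ T, e i x = b i then 1 else 0

variable {e} [∀ i, DecidableEq (β i)]

lemma cylIndicator_update_apply {T : Finset ι} {a : ι} (ha : a ∈ T) (b : ∀ i, β i) (v : β a)
    (x : X) :
    cylIndicator e T (update b a v) x =
      if e a x = v then (cylIndicator e (T.erase a) b x : R) else 0 := by
  unfold cylIndicator
  split_ifs <;> grind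

lemma sum_cylIndicator_update {T : Finset ι} {a : ι} [Fintype (β a)] (ha : a ∈ T)
    (b : ∀ i, β i) :
    ∑ v, cylIndicator (R := R) e T (update b a v) = cylIndicator e (T.erase a) b := by
  ext x
  simp [Finset.sum_apply, cylIndicator_update_apply ha]

lemma filter_update_eq_zero_eq_erase [∀ i, Zero (β i)] (T : Finset ι) (b : ∀ i, β i) {a : ι}
    {v : β a} (hv : v ≠ 0) :
    {i ∈ T | update b a v i = 0} = {i ∈ T | b i = 0}.erase a := by
  ext i
  grind

theorem cylIndicator_mem_span [∀ i, Zero (β i)] [∀ i, Fintype (β i)] (T : Finset ι)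
    (b : ∀ i, β i) :
    cylIndicator (R := R) e T b ∈
      span R {f | ∃ S c, (∀ i ∈ S, c i ≠ 0) ∧ cylIndicator e S c = f} := by
  by_cases h : ∃ a ∈ T, b a = 0
  · obtain ⟨a, ha, hba⟩ := h
    have hsplit : cylIndicator e T b = cylIndicator e (T.erase a) b -
        ∑ v ∈ univ.erase 0, cylIndicator (R := R) e T (update b a v) := by
      rw [eq_sub_iff_add_eq, ← sum_cylIndicator_update ha, ← add_sum_erase _ _ (mem_univ 0),
        ← hba, update_eq_self]
    rw [hsplit]
    exact sub_mem (cylIndicator_mem_span (T.erase a) b)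
      (sum_mem fun v hv => cylIndicator_mem_span T (update b a v))
  · push Not at h
    exact subset_span ⟨T, b, h, rfl⟩
termination_by #{i ∈ T | b i = 0}
decreasing_by
  · rw [filter_erase]
    exact card_erase_lt_of_mem (mem_filter.2 ⟨ha, hba⟩)
  · rw [filter_update_eq_zero_eq_erase T b (ne_of_mem_erase hv)]
    exact card_erase_lt_of_mem (mem_filter.2 ⟨ha, hba⟩)

end CylIndicator

theorem Matrix.rank_le_card_of_row_mem_span {m n κ K : Type*} [Finite m] [Fintype n]
    [Fintype κ] [Field K] (A : Matrix m n K) (v : κ → n → K)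
    (h : ∀ r, A r ∈ span K (Set.range v)) :
    A.rank ≤ Fintype.card κ := by
  rw [rank_eq_finrank_span_row]
  exact (finrank_mono (span_le.2 (Set.range_subset_iff.2 h))).trans (finrank_range_le_card v)

theorem Fintype.card_sigma_finset_pi_prod {ι : Type*} [Fintype ι] [DecidableEq ι]
    (α β : ι → Type*) [∀ i, Fintype (α i)] [∀ i, Fintype (β i)] :
    card (Σ S : Finset ι, (∀ i : S, α i) × (∀ i : S, β i)) =
      ∏ i, (card (α i) * card (β i) + 1) := by
  rw [card_sigma, prod_add_one, powerset_univ]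
  simp [card_pi, prod_mul_distrib, prod_attach (f := fun i => card (α i)),
    prod_attach (f := fun i => card (β i))]

theorem rows_of_M_in_span_of_V_general
    (n : ℕ) (k m : Fin n → ℕ) [∀ i, NeZero (m i)] :
    (∀ (l : ∀ i, Fin (m i)) (φ : ∀ i, Fin (k i)),
      (fun (L : ∀ i, Fin (k i) → Fin (m i)) =>
          if ∀ i, L i (φ i) = l i then (1 : ℝ) else 0) ∈
        Submodule.span ℝ (Set.range
          (fun (t : Σ S : Finset (Fin n),
              (∀ i : S, Fin (k i.1)) × (∀ i : S, {v : Fin (m i.1) // v ≠ 0})) =>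
            (fun (L : ∀ i, Fin (k i) → Fin (m i)) =>
              if ∀ i : t.1, L i.1 (t.2.1 i) = (t.2.2 i).1 then (1 : ℝ) else 0)))) ∧
    (Matrix.of (fun (p : (∀ i, Fin (m i)) × (∀ i, Fin (k i)))
        (L : ∀ i, Fin (k i) → Fin (m i)) =>
        if ∀ i, L i (p.2 i) = p.1 i then (1 : ℝ) else 0)).rank ≤
      ∏ i, (k i * (m i - 1) + 1) := by
  refine (fun hrows => ⟨hrows, ?_⟩) fun l φ => ?_
  · let e : ∀ i, (∀ i, Fin (k i) → Fin (m i)) → Fin (m i) := fun i L => L i (φ i)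
    have hrow_eq : cylIndicator (R := ℝ) e univ l =
        fun L => if ∀ i, L i (φ i) = l i then 1 else 0 := by
      ext L
      simp [e, cylIndicator]
    refine hrow_eq ▸ span_mono ?_ (cylIndicator_mem_span univ l)
    rintro - ⟨S, c, hc, rfl⟩
    exact ⟨⟨S, fun i => φ i, fun i => ⟨c i, hc i i.2⟩⟩, funext fun L => by simp [e, cylIndicator]⟩
  refine (Matrix.rank_le_card_of_row_mem_span _ _ fun p : _ × _ => hrows p.1 p.2).trans_eq ?_
  convert Fintype.card_sigma_finset_pi_prod (fun i => Fin (k i))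
    (fun i => {v : Fin (m i) // v ≠ 0}) using 2
  simp [Fintype.card_subtype_compl]

/-- Every row of the matrix `M` (complete design) lies in the `ℝ`-linear span of the
vectors `V (S, j, l)` with `l` avoiding the base value `0` on `S`; consequently the rank
of `M` is at most `∏ i, (k i * (m i − 1) + 1)`. -/
theorem rows_of_M_in_span_of_V
    (n : ℕ) (hn : 1 ≤ n) (k m : Fin n → ℕ)
    (hk : ∀ i, 1 ≤ k i) [∀ i, NeZero (m i)] :
    (∀ (l : ∀ i, Fin (m i)) (φ : ∀ i, Fin (k i)),
      (fun (L : ∀ i, Fin (k i) → Fin (m i)) =>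
          if ∀ i, L i (φ i) = l i then (1 : ℝ) else 0) ∈
        Submodule.span ℝ (Set.range
          (fun (t : Σ S : Finset (Fin n),
              (∀ i : S, Fin (k i.1)) × (∀ i : S, {v : Fin (m i.1) // v ≠ 0})) =>
            (fun (L : ∀ i, Fin (k i) → Fin (m i)) =>
              if ∀ i : t.1, L i.1 (t.2.1 i) = (t.2.2 i).1 then (1 : ℝ) else 0)))) ∧
    (Matrix.of (fun (p : (∀ i, Fin (m i)) × (∀ i, Fin (k i)))
        (L : ∀ i, Fin (k i) → Fin (m i)) =>
        if ∀ i, L i (p.2 i) = p.1 i then (1 : ℝ) else 0)).rank ≤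
      ∏ i, (k i * (m i - 1) + 1) :=
  rows_of_M_in_span_of_V_general n k m
end

section
/- Suppose T = Π i, Fin (k i) (complete design) and P satisfies complete marginal selectivity: for every subset S ⊆ Fin n, every v ∈ Π i : S, Fin (m i), and all treatments φ, φ′ with φ i = φ′ i for all i ∈ S, the sums ∑_{l : l i = v i for all i ∈ S} P φ l and ∑_{l : l i = v i for all i ∈ S} P φ′ l are equal. For each S ⊆ Fin n, j ∈ Π i : S, Fin (k i), and v ∈ Π i : S, Fin (m i) with v i ≠ 0 for all i ∈ S, let P* (S, j, v) := ∑_{l : l i = v i for all i ∈ S} P φ l for any treatment φ with φ i = j i on S (well-defined by marginal selectivity). Then for every Q : (Π i, (Fin (k i) → Fin (m i))) → ℝ with Q ≥ 0, the following are equivalent: (a) Q solves M Q = P; (b) for every such triple (S, j, v), ∑_{L : L i (j i) = v i for all i ∈ S} Q L = P* (S, j, v) (the reduced system M* Q = P*). -/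
/-! For a fixed treatment `φ`, the left-hand sides of both systems are marginals of the
distribution `l ↦ ∑ {Q L | L i (φ i) = l i ∀ i}` of outcomes, and the right-hand sides are the
same marginals of `P φ`. A function `μ` on a finite product `∏ i, β i` is determined by its
cylinder sums `∑ {μ l | l = w on S}` over the `w` that avoid a chosen value `0` on `S`: if
`w i = 0` for some `i ∈ S`, summing over the value of `l i` gives
`∑_{S, w} = ∑_{S \ {i}, w} - ∑_{c ≠ 0} ∑_{S, w[i ↦ c]}`, and both terms on the right have fewer
zero coordinates on their index set. -/

open Finset

section CylinderSum

variable {ι : Type*} [Fintype ι] [DecidableEq ι] {β : ι → Type*} [∀ i, Fintype (β i)]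
  [∀ i, DecidableEq (β i)] {M : Type*} [AddCommGroup M]

def cylinderSum (μ : (∀ i, β i) → M) (S : Finset ι) (w : ∀ i, β i) : M :=
  ∑ l ∈ univ.filter (fun l => ∀ i ∈ S, l i = w i), μ l

theorem cylinderSum_univ (μ : (∀ i, β i) → M) (w : ∀ i, β i) :
    cylinderSum μ univ w = μ w := by
  simp [cylinderSum, ← funext_iff, filter_eq']

theorem cylinderSum_erase (μ : (∀ i, β i) → M) {S : Finset ι} {i : ι} (hi : i ∈ S)
    (w : ∀ i, β i) :
    cylinderSum μ (S.erase i) w = ∑ c, cylinderSum μ S (Function.update w i c) := by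
  rw [cylinderSum, ← sum_fiberwise _ (fun l : ∀ i, β i => l i)]
  refine sum_congr rfl fun c _ => ?_
  rw [cylinderSum, filter_filter]
  refine sum_congr (filter_congr fun l _ => ?_) fun _ _ => rfl
  constructor
  · rintro ⟨h, rfl⟩ j hj
    by_cases hji : j = i
    · subst hji; simp
    · simpa [hji] using h j (mem_erase.2 ⟨hji, hj⟩)
  · intro h
    refine ⟨fun j hj => ?_, by simpa using h i hi⟩
    simpa [(mem_erase.1 hj).1] using h j (mem_erase.1 hj).2

theorem cylinderSum_eq_sub [∀ i, Zero (β i)] (μ : (∀ i, β i) → M) {S : Finset ι} {i : ι}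
    (hi : i ∈ S) {w : ∀ i, β i} (hw : w i = 0) :
    cylinderSum μ S w = cylinderSum μ (S.erase i) w -
      ∑ c ∈ univ.erase (0 : β i), cylinderSum μ S (Function.update w i c) := by
  rw [cylinderSum_erase μ hi, ← add_sum_erase _ _ (mem_univ 0), ← hw, Function.update_eq_self,
    add_sub_cancel_right]

theorem cylinderSum_eq_of_forall_ne_zero [∀ i, Zero (β i)] {μ ν : (∀ i, β i) → M}
    (h : ∀ S w, (∀ i ∈ S, w i ≠ 0) → cylinderSum μ S w = cylinderSum ν S w)
    (S : Finset ι) (w : ∀ i, β i) : cylinderSum μ S w = cylinderSum ν S w := by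
  suffices ∀ Z : Finset ι, ∀ S w, ({i ∈ S | w i = 0} : Finset ι) = Z →
      cylinderSum μ S w = cylinderSum ν S w from this _ S w rfl
  intro Z
  induction Z using Finset.induction_on with
  | empty =>
    intro S w hZ
    exact h S w fun i hi hwi => by
      simpa [hZ] using (mem_filter.2 ⟨hi, hwi⟩ : i ∈ ({i ∈ S | w i = 0} : Finset ι))
  | insert a Z ha ih =>
    intro S w hZ
    obtain ⟨haS, hwa⟩ := mem_filter.1 (hZ ▸ mem_insert_self a Z)
    have herase : ({i ∈ S.erase a | w i = 0} : Finset ι) = Z := by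
      rw [filter_erase, hZ, erase_insert ha]
    have hupdate (c : β a) (hc : c ≠ 0) :
        ({i ∈ S | Function.update w a c i = 0} : Finset ι) = Z := by
      rw [← erase_insert ha, ← hZ]
      ext i
      by_cases hia : i = a
      · subst hia; simp [hc]
      · simp [hia]
    rw [cylinderSum_eq_sub μ haS hwa, cylinderSum_eq_sub ν haS hwa, ih _ _ herase,
      sum_congr rfl fun c hc => ih _ _ (hupdate c (ne_of_mem_erase hc))]

theorem eq_of_cylinderSum_eq_of_forall_ne_zero [∀ i, Zero (β i)] {μ ν : (∀ i, β i) → M}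
    (h : ∀ S w, (∀ i ∈ S, w i ≠ 0) → cylinderSum μ S w = cylinderSum ν S w) : μ = ν :=
  funext fun w => by
    simpa only [cylinderSum_univ] using cylinderSum_eq_of_forall_ne_zero h univ w

def fiberSum {α : Type*} [Fintype α] (Q : α → M) (g : α → ∀ i, β i) (l : ∀ i, β i) : M :=
  ∑ a ∈ univ.filter (fun a => g a = l), Q a

theorem cylinderSum_fiberSum {α : Type*} [Fintype α] (Q : α → M) (g : α → ∀ i, β i)
    (S : Finset ι) (w : ∀ i, β i) :
    cylinderSum (fiberSum Q g) S w = ∑ a ∈ univ.filter (fun a => ∀ i ∈ S, g a i = w i), Q a := by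
  rw [← sum_fiberwise_of_maps_to (t := univ.filter fun l => ∀ i ∈ S, l i = w i) (g := g)
    (fun a ha => by simpa using ha)]
  refine sum_congr rfl fun l hl => ?_
  rw [fiberSum, filter_filter]
  refine sum_congr (filter_congr fun a _ => ?_) fun _ _ => rfl
  exact ⟨fun h => ⟨h ▸ (mem_filter.1 hl).2, h⟩, And.right⟩

theorem reducedSystem_iff [∀ i, Zero (β i)] {α : ι → Type*} [∀ i, Fintype (α i)]
    [∀ i, DecidableEq (α i)] (Q : (∀ i, α i → β i) → M) (P : (∀ i, α i) → (∀ i, β i) → M) :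
    (∀ (S : Finset ι) (j : ∀ i : S, α i) (v : ∀ i : S, β i), (∀ i, v i ≠ 0) →
      ∀ φ : ∀ i, α i, (∀ i : S, φ i = j i) →
      ∑ L ∈ univ.filter (fun L : ∀ i, α i → β i => ∀ i : S, L i (j i) = v i), Q L =
        ∑ l ∈ univ.filter (fun l : ∀ i, β i => ∀ i : S, l i = v i), P φ l) ↔
    ∀ φ S w, (∀ i ∈ S, w i ≠ 0) →
      cylinderSum (fiberSum Q fun L i => L i (φ i)) S w = cylinderSum (P φ) S w := by
  simp only [cylinderSum_fiberSum]
  simp only [cylinderSum]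
  constructor
  · intro h φ S w hw
    simpa [Subtype.forall] using
      h S (fun i => φ i) (fun i => w i) (fun i => hw i.1 i.2) φ fun _ => rfl
  · intro h S j v hv φ hφ
    have := h φ S (fun i => if hi : i ∈ S then v ⟨i, hi⟩ else 0) (by simp [hv])
    refine (sum_congr ?_ fun _ _ => rfl).trans (this.trans (sum_congr ?_ fun _ _ => rfl)) <;>
      ext <;> simp +contextual [← hφ]

end CylinderSum

theorem full_system_iff_reduced_system_general
    (n : ℕ) (k m : Fin n → ℕ)
    [∀ i, NeZero (m i)]
    (P : (∀ i, Fin (k i)) → (∀ i, Fin (m i)) → ℝ)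
    (Q : (∀ i, Fin (k i) → Fin (m i)) → ℝ) :
    (∀ (φ : ∀ i, Fin (k i)) (l : ∀ i, Fin (m i)),
      ∑ L ∈ Finset.univ.filter (fun L : ∀ i, Fin (k i) → Fin (m i) =>
          ∀ i, L i (φ i) = l i), Q L = P φ l) ↔
    (∀ (S : Finset (Fin n)) (j : ∀ i : S, Fin (k i.1)) (v : ∀ i : S, Fin (m i.1)),
      (∀ i : S, v i ≠ 0) →
      ∀ φ : ∀ i, Fin (k i), (∀ i : S, φ i.1 = j i) →
      ∑ L ∈ Finset.univ.filter (fun L : ∀ i, Fin (k i) → Fin (m i) =>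
          ∀ i : S, L i.1 (j i) = v i), Q L =
      ∑ l ∈ Finset.univ.filter (fun l : ∀ i, Fin (m i) => ∀ i : S, l i.1 = v i), P φ l) := by
  refine Iff.trans (forall_congr' fun φ => ?_) (reducedSystem_iff Q P).symm
  have hfull : (∀ l, ∑ L ∈ univ.filter (fun L : ∀ i, Fin (k i) → Fin (m i) =>
      ∀ i, L i (φ i) = l i), Q L = P φ l) ↔ fiberSum Q (fun L i => L i (φ i)) = P φ := by
    simp only [funext_iff, fiberSum]
  rw [hfull]
  exact ⟨fun h _ _ _ => h ▸ rfl, eq_of_cylinderSum_eq_of_forall_ne_zero⟩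

/-- For the complete design and a `P` satisfying complete marginal selectivity, a
nonnegative `Q` solves the full system `M Q = P` iff it solves the reduced hierarchical
system `M* Q = P*` (where `P* (S, j, v)` is the marginal probability
`∑_{l : l = v on S} P φ l` for any treatment `φ` agreeing with `j` on `S`). -/
theorem full_system_iff_reduced_system
    (n : ℕ) (hn : 1 ≤ n) (k m : Fin n → ℕ)
    (hk : ∀ i, 1 ≤ k i) [∀ i, NeZero (m i)]
    (P : (∀ i, Fin (k i)) → (∀ i, Fin (m i)) → ℝ)
    (hMS : ∀ (S : Finset (Fin n)) (v : ∀ i : S, Fin (m i.1))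
        (φ φ' : ∀ i, Fin (k i)), (∀ i ∈ S, φ i = φ' i) →
      ∑ l ∈ Finset.univ.filter (fun l : ∀ i, Fin (m i) => ∀ i : S, l i.1 = v i), P φ l =
      ∑ l ∈ Finset.univ.filter (fun l : ∀ i, Fin (m i) => ∀ i : S, l i.1 = v i), P φ' l)
    (Q : (∀ i, Fin (k i) → Fin (m i)) → ℝ) (hQ : ∀ L, 0 ≤ Q L) :
    (∀ (φ : ∀ i, Fin (k i)) (l : ∀ i, Fin (m i)),
      ∑ L ∈ Finset.univ.filter (fun L : ∀ i, Fin (k i) → Fin (m i) =>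
          ∀ i, L i (φ i) = l i), Q L = P φ l) ↔
    (∀ (S : Finset (Fin n)) (j : ∀ i : S, Fin (k i.1)) (v : ∀ i : S, Fin (m i.1)),
      (∀ i : S, v i ≠ 0) →
      ∀ φ : ∀ i, Fin (k i), (∀ i : S, φ i.1 = j i) →
      ∑ L ∈ Finset.univ.filter (fun L : ∀ i, Fin (k i) → Fin (m i) =>
          ∀ i : S, L i.1 (j i) = v i), Q L =
      ∑ l ∈ Finset.univ.filter (fun l : ∀ i, Fin (m i) => ∀ i : S, l i.1 = v i), P φ l) :=
  full_system_iff_reduced_system_general n k m P Q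
end

section
/- If Q : (Π i, (Fin (k i) → Fin (m i))) → ℝ solves the linear system M Q = P, then P satisfies marginal selectivity: for every subset S ⊆ Fin n, every v ∈ Π i : S, Fin (m i), and all treatments φ, φ′ ∈ T with φ i = φ′ i for every i ∈ S, ∑_{l : l i = v i for all i ∈ S} P φ l = ∑_{l : l i = v i for all i ∈ S} P φ′ l. In particular, the system M Q = P has no solution whenever P violates marginal selectivity. -/
/-!
Summing the equations of `M Q = P` over the cylinder `{l | l i = v i for i ∈ S}` shows that the
marginal of `P φ` on it is the `Q`-weight of the response profiles `L` with `L i (φ i) = v i` for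
`i ∈ S`; that set of profiles depends only on the restriction of `φ` to `S`.
-/

open Finset

theorem sum_cylinder_eq_sum_response {ι : Type*} [Fintype ι] [DecidableEq ι]
    {α β : ι → Type*} [∀ i, Fintype (α i)] [∀ i, DecidableEq (α i)]
    [∀ i, Fintype (β i)] [∀ i, DecidableEq (β i)] {M : Type*} [AddCommMonoid M]
    {ψ : ∀ i, α i} {P : (∀ i, β i) → M} {Q : (∀ i, α i → β i) → M}
    (hQP : ∀ l : ∀ i, β i, ∑ L ∈ univ.filter (fun L : ∀ i, α i → β i =>
      ∀ i, L i (ψ i) = l i), Q L = P l)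
    (S : Finset ι) (v : ∀ i : S, β i) :
    ∑ l ∈ univ.filter (fun l : ∀ i, β i => ∀ i : S, l i.1 = v i), P l =
      ∑ L ∈ univ.filter (fun L : ∀ i, α i → β i => ∀ i : S, L i.1 (ψ i.1) = v i), Q L := by
  have fiberwise := sum_fiberwise_eq_sum_filter univ
    (univ.filter fun l : ∀ i, β i => ∀ i : S, l i.1 = v i) (fun L i => L i (ψ i)) Q
  simpa only [funext_iff, hQP, mem_filter, mem_univ, true_and] using fiberwise

theorem marginal_selectivity_of_solution_general
    (n : ℕ) (k m : Fin n → ℕ)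
    (T : Set (∀ i, Fin (k i)))
    (P : (∀ i, Fin (k i)) → (∀ i, Fin (m i)) → ℝ)
    (Q : (∀ i, Fin (k i) → Fin (m i)) → ℝ)
    (hQP : ∀ φ ∈ T, ∀ l : ∀ i, Fin (m i),
      ∑ L ∈ Finset.univ.filter (fun L : ∀ i, Fin (k i) → Fin (m i) =>
          ∀ i, L i (φ i) = l i), Q L = P φ l) :
    ∀ (S : Finset (Fin n)) (v : ∀ i : S, Fin (m i.1)),
      ∀ φ ∈ T, ∀ φ' ∈ T, (∀ i ∈ S, φ i = φ' i) →
      ∑ l ∈ Finset.univ.filter (fun l : ∀ i, Fin (m i) => ∀ i : S, l i.1 = v i), P φ l =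
      ∑ l ∈ Finset.univ.filter (fun l : ∀ i, Fin (m i) => ∀ i : S, l i.1 = v i), P φ' l := by
  intro S v φ hφ φ' hφ' hagree
  -- `convert` only reconciles the `Fin`-specific and the generic decidability instances
  have marginal := fun ψ (hψ : ψ ∈ T) =>
    sum_cylinder_eq_sum_response (P := P ψ) (Q := Q) (fun l => by convert hQP ψ hψ l) S v
  rw [marginal φ hφ, marginal φ' hφ']
  refine sum_congr (filter_congr fun L _ => ?_) fun _ _ => rfl
  simp only [hagree _ (Subtype.prop _)]

/-- If `Q` solves the linear system `M Q = P`, then `P` satisfies marginal selectivity;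
in particular the system is infeasible whenever marginal selectivity is violated. -/
theorem marginal_selectivity_of_solution
    (n : ℕ) (hn : 1 ≤ n) (k m : Fin n → ℕ)
    (hk : ∀ i, 1 ≤ k i) (hm : ∀ i, 1 ≤ m i)
    (T : Set (∀ i, Fin (k i))) (hT : T.Nonempty)
    (P : (∀ i, Fin (k i)) → (∀ i, Fin (m i)) → ℝ)
    (Q : (∀ i, Fin (k i) → Fin (m i)) → ℝ)
    (hQP : ∀ φ ∈ T, ∀ l : ∀ i, Fin (m i),
      ∑ L ∈ Finset.univ.filter (fun L : ∀ i, Fin (k i) → Fin (m i) =>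
          ∀ i, L i (φ i) = l i), Q L = P φ l) :
    ∀ (S : Finset (Fin n)) (v : ∀ i : S, Fin (m i.1)),
      ∀ φ ∈ T, ∀ φ' ∈ T, (∀ i ∈ S, φ i = φ' i) →
      ∑ l ∈ Finset.univ.filter (fun l : ∀ i, Fin (m i) => ∀ i : S, l i.1 = v i), P φ l =
      ∑ l ∈ Finset.univ.filter (fun l : ∀ i, Fin (m i) => ∀ i : S, l i.1 = v i), P φ' l :=
  marginal_selectivity_of_solution_general n k m T P Q hQP
end

section
/- (Fine's inequalities.) Let μ : Fin 2 × Fin 2 → Measure (Fin 2 × Fin 2) assign to each pair of factor points (j₁, j₂) a probability measure on pairs of binary outcomes, satisfying marginal selectivity: the first marginal of μ (j₁, j₂) does not depend on j₂ and the second marginal does not depend on j₁. Write p j₁ j₂ := (μ (j₁, j₂) {(1,1)}).toReal, q₁ j₁ := (μ (j₁, j₂) {(a, b) | a = 1}).toReal (independent of j₂), and q₂ j₂ := (μ (j₁, j₂) {(a, b) | b = 1}).toReal (independent of j₁). Then there exists a probability measure ξ on (Fin 2 → Fin 2) × (Fin 2 → Fin 2) whose pushforward under the map (L₁, L₂) ↦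 (L₁ j₁, L₂ j₂) equals μ (j₁, j₂) for every (j₁, j₂) ∈ Fin 2 × Fin 2, if and only if for all j₁, j₁′, j₂, j₂′ ∈ Fin 2 with j₁ ≠ j₁′ and j₂ ≠ j₂′: −1 ≤ p j₁ j₂ + p j₁′ j₂ + p j₁′ j₂′ − p j₁ j₂′ − q₁ j₁′ − q₂ j₂ ≤ 0. -/
/-!
Necessity: Fine's expression is the expectation of a combination of indicators which takes
values in `[-1, 0]` pointwise.

Sufficiency: a JDC-measure is a joint law of the four bits `L₁ 0, L₁ 1, L₂ 0, L₂ 1` with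
prescribed laws of the pairs `(L₁ j₁, L₂ j₂)`. Choose a law of `L₁` (one free parameter `u`, the
mass of `L₁ = ![1, 1]`), extend it for each `j` to a law of `(L₁, L₂ j)` with the prescribed
pair marginals (one more free parameter), and glue the two extensions by making `L₂ 0` and `L₂ 1`
conditionally independent given `L₁`. Each free parameter must lie in an interval cut out by
linear bounds, and Fine's inequalities are exactly what makes the interval for `u` nonempty.
-/

open MeasureTheory Finset

lemma sum_fin_two_arrow {β M : Type*} [Fintype β] [AddCommMonoid M] (g : (Fin 2 → β) → M) :
    ∑ x, g x = ∑ a, ∑ b, g ![a, b] := by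
  rw [← (finTwoArrowEquiv β).symm.sum_comp, Fintype.sum_prod_type]
  rfl

lemma exists_forall_le_and_forall_le {ι κ : Type*} [Finite ι] [Nonempty ι] {l : ι → ℝ}
    {h : κ → ℝ} (hlh : ∀ i k, l i ≤ h k) : ∃ t, (∀ i, l i ≤ t) ∧ ∀ k, t ≤ h k :=
  ⟨⨆ i, l i, fun i => le_ciSup (Finite.bddAbove_range l) i, fun k => ciSup_le fun i => hlh i k⟩

/-- The masses of the points of `Fin 2 × Fin 2` under a measure of total mass `n` giving mass `q`
to `{x.1 = 1}`, mass `r` to `{x.2 = 1}` and mass `p` to `(1, 1)`. -/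
def bitTable (n p q r : ℝ) : Fin 2 → Fin 2 → ℝ :=
  ![![n - q - r + p, r - p], ![q - p, p]]

lemma bitTable_nonneg_iff {n p q r : ℝ} :
    (∀ a b, 0 ≤ bitTable n p q r a b) ↔ 0 ≤ p ∧ p ≤ q ∧ p ≤ r ∧ q + r - n ≤ p := by
  simp only [Fin.forall_fin_two, bitTable, Matrix.cons_val_zero, Matrix.cons_val_one]
  constructor
  · rintro ⟨⟨h₀₀, h₀₁⟩, h₁₀, h₁₁⟩
    refine ⟨h₁₁, ?_, ?_, ?_⟩ <;> linarith
  · rintro ⟨h₁, h₂, h₃, h₄⟩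
    refine ⟨⟨?_, ?_⟩, ?_, ?_⟩ <;> linarith

lemma measureReal_singleton_eq_bitTable (ν : Measure (Fin 2 × Fin 2)) [IsProbabilityMeasure ν]
    (a b : Fin 2) :
    ν.real {(a, b)} = bitTable 1 (ν.real {(1, 1)}) (ν.real {x | x.1 = 1})
      (ν.real {x | x.2 = 1}) a b := by
  have hfst : ν.real {x | x.1 = 1} = ν.real {(1, 0)} + ν.real {(1, 1)} := by
    rw [← sum_pair (f := fun x => ν.real {x}) (by decide : ((1, 0) : Fin 2 × Fin 2) ≠ (1, 1)),
      sum_measureReal_singleton]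
    congr 1
    ext ⟨x₁, x₂⟩
    fin_cases x₁ <;> fin_cases x₂ <;> simp
  have hsnd : ν.real {x | x.2 = 1} = ν.real {(0, 1)} + ν.real {(1, 1)} := by
    rw [← sum_pair (f := fun x => ν.real {x}) (by decide : ((0, 1) : Fin 2 × Fin 2) ≠ (1, 1)),
      sum_measureReal_singleton]
    congr 1
    ext ⟨x₁, x₂⟩
    fin_cases x₁ <;> fin_cases x₂ <;> simp
  have htotal : ∑ x, ν.real {x} = 1 := by simp
  simp only [Fintype.sum_prod_type, Fin.sum_univ_two] at htotal
  fin_cases a <;> fin_cases b <;> simp [bitTable] <;> linarith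

section CondIndepCoupling

variable {α β κ : Type*} [Fintype κ]

/-- Given laws `T k` of pairs `(x, f k)` sharing the law `w` of `x`, the joint law of `(x, f)`
under which the coordinates of `f` are conditionally independent given `x`. Where `w x = 0`
the division returns `0`, which is harmless since then every `T k x` vanishes. -/
noncomputable def condIndepCoupling (w : α → ℝ) (T : κ → α → β → ℝ) (x : α) (f : κ → β) : ℝ :=
  (∏ k, T k x (f k)) / w x ^ (Fintype.card κ - 1)

lemma condIndepCoupling_nonneg {w : α → ℝ} {T : κ → α → β → ℝ} (hT : ∀ k x b, 0 ≤ T k x b)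
    (hw : ∀ x, 0 ≤ w x) (x : α) (f : κ → β) : 0 ≤ condIndepCoupling w T x f :=
  div_nonneg (prod_nonneg fun k _ => hT k x (f k)) (pow_nonneg (hw x) _)

lemma sum_condIndepCoupling_eq [Fintype β] [DecidableEq β] [DecidableEq κ] {w : α → ℝ}
    {T : κ → α → β → ℝ}
    (hT : ∀ k x b, 0 ≤ T k x b) (hTw : ∀ k x, ∑ b, T k x b = w x) (j : κ) (x : α) (b : β) :
    ∑ f : κ → β with f j = b, condIndepCoupling w T x f = T j x b := by
  have hfilter : ({f | f j = b} : Finset (κ → β)) =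
      Fintype.piFinset fun k => if k = j then {b} else univ := by
    ext f
    simp only [mem_filter, mem_univ, true_and, Fintype.mem_piFinset]
    constructor
    · rintro rfl k
      split_ifs with hk <;> simp [hk]
    · intro hf
      simpa using hf j
  have hprod :
      ∑ f : κ → β with f j = b, ∏ k, T k x (f k) = T j x b * w x ^ (Fintype.card κ - 1) := by
    rw [hfilter, ← prod_univ_sum, ← mul_prod_erase univ _ (mem_univ j)]
    simp only [↓reduceIte, sum_singleton]
    rw [prod_congr rfl fun k hk => by rw [if_neg (ne_of_mem_erase hk), hTw], prod_const,
      card_erase_of_mem (mem_univ j), card_univ]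
  simp only [condIndepCoupling]
  rw [← sum_div, hprod]
  rcases eq_or_ne (w x) 0 with hx | hx
  · have : T j x b = 0 := by
      refine le_antisymm ?_ (hT j x b)
      calc T j x b ≤ ∑ b', T j x b' := single_le_sum (fun b' _ => hT j x b') (mem_univ b)
        _ = 0 := by rw [hTw, hx]
    simp [this]
  · exact mul_div_cancel_right₀ _ (pow_ne_zero _ hx)

end CondIndepCoupling

theorem measureReal_fine_bounds {Ω : Type*} [MeasurableSpace Ω] (P : Measure Ω)
    [IsProbabilityMeasure P] {A A' B B' : Set Ω} (hA : MeasurableSet A)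
    (hA' : MeasurableSet A') (hB : MeasurableSet B) (hB' : MeasurableSet B') :
    -1 ≤ P.real (A ∩ B) + P.real (A' ∩ B) + P.real (A' ∩ B') - P.real (A ∩ B')
        - P.real A' - P.real B ∧
      P.real (A ∩ B) + P.real (A' ∩ B) + P.real (A' ∩ B') - P.real (A ∩ B')
        - P.real A' - P.real B ≤ 0 := by
  set g : Ω → ℝ := (A ∩ B).indicator 1 + (A' ∩ B).indicator 1 + (A' ∩ B').indicator 1
    - (A ∩ B').indicator 1 - A'.indicator 1 - B.indicator 1 with hg
  have hg_integrable : Integrable g P := by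
    repeat' first | apply Integrable.sub | apply Integrable.add
    all_goals exact (integrable_const 1).indicator (by measurability)
  have hg_integral : ∫ ω, g ω ∂P = P.real (A ∩ B) + P.real (A' ∩ B) + P.real (A' ∩ B')
      - P.real (A ∩ B') - P.real A' - P.real B := by
    rw [hg, integral_sub', integral_sub', integral_sub', integral_add', integral_add']
    · simp only [integral_indicator_one, hA', hB, hA.inter hB, hA'.inter hB, hA'.inter hB',
        hA.inter hB']
    all_goals
      repeat' first | apply Integrable.sub | apply Integrable.add
    all_goals exact (integrable_const 1).indicator (by measurability)
  have hg_bounds : ∀ ω, -1 ≤ g ω ∧ g ω ≤ 0 := by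
    intro ω
    by_cases h₁ : ω ∈ A <;> by_cases h₂ : ω ∈ A' <;> by_cases h₃ : ω ∈ B <;>
      by_cases h₄ : ω ∈ B' <;> simp [hg, Set.indicator, h₁, h₂, h₃, h₄]
  rw [← hg_integral]
  constructor
  · calc (-1 : ℝ) = ∫ _, (-1 : ℝ) ∂P := by simp
      _ ≤ ∫ ω, g ω ∂P :=
        integral_mono (integrable_const _) hg_integrable fun ω => (hg_bounds ω).1
  · exact integral_nonpos fun ω => (hg_bounds ω).2

lemma exists_law_of_bit_triple {u r : ℝ} {p q : Fin 2 → ℝ}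
    (hpqr : ∀ i a b, 0 ≤ bitTable 1 (p i) (q i) r a b)
    (hu : ∀ a b, 0 ≤ bitTable 1 u (q 0) (q 1) a b)
    (hlow : p 0 + p 1 - r ≤ u) (hlow' : q 0 + q 1 + r - p 0 - p 1 - 1 ≤ u)
    (hup : u ≤ q 0 + p 1 - p 0) (hup' : u ≤ q 1 + p 0 - p 1) :
    ∃ T : (Fin 2 → Fin 2) → Fin 2 → ℝ, (∀ x b, 0 ≤ T x b) ∧
      (∀ x, ∑ b, T x b = bitTable 1 u (q 0) (q 1) (x 0) (x 1)) ∧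
      ∀ i a b, ∑ x : Fin 2 → Fin 2 with x i = a, T x b = bitTable 1 (p i) (q i) r a b := by
  simp only [bitTable_nonneg_iff] at hpqr hu
  obtain ⟨hp₀, hpq₀, hpr₀, hpqr₀⟩ := hpqr 0
  obtain ⟨hp₁, hpq₁, hpr₁, hpqr₁⟩ := hpqr 1
  -- `t` is the mass of `{x = ![1, 1], b = 1}`
  obtain ⟨t, ht_low, ht_up⟩ := exists_forall_le_and_forall_le
    (l := ![0, p 0 + p 1 - r, p 0 - q 0 + u, p 1 - q 1 + u])
    (h := ![u, p 0, p 1, u - q 0 - q 1 + p 0 + p 1 + 1 - r]) (by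
      intro i k
      fin_cases i <;> fin_cases k <;> simp <;> linarith)
  simp only [Fin.forall_fin_succ, Matrix.cons_val_zero, Matrix.cons_val_succ,
    Matrix.cons_val_fin_one, forall_const] at ht_low ht_up
  obtain ⟨ht₀, ht₁, ht₂, ht₃⟩ := ht_low
  obtain ⟨ht₄, ht₅, ht₆, ht₇⟩ := ht_up
  have h₀ : ∀ a b, 0 ≤ bitTable (1 - r) (u - t) (q 0 - p 0) (q 1 - p 1) a b :=
    bitTable_nonneg_iff.mpr ⟨by linarith, by linarith, by linarith, by linarith⟩
  have h₁ : ∀ a b, 0 ≤ bitTable r t (p 0) (p 1) a b :=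
    bitTable_nonneg_iff.mpr ⟨by linarith, by linarith, by linarith, by linarith⟩
  refine ⟨fun x => ![bitTable (1 - r) (u - t) (q 0 - p 0) (q 1 - p 1) (x 0) (x 1),
    bitTable r t (p 0) (p 1) (x 0) (x 1)], ?_, ?_, ?_⟩
  · intro x b
    fin_cases b
    exacts [h₀ _ _, h₁ _ _]
  · intro x
    simp only [Fin.sum_univ_two, Matrix.cons_val_zero, Matrix.cons_val_one]
    generalize x 0 = a, x 1 = b
    fin_cases a <;> fin_cases b <;> simp [bitTable] <;> ring
  · intro i a b
    rw [sum_filter, sum_fin_two_arrow]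
    fin_cases i <;> fin_cases a <;> fin_cases b <;> simp [bitTable] <;> ring

theorem exists_weights_of_fine (p : Fin 2 → Fin 2 → ℝ) (q r : Fin 2 → ℝ)
    (hpqr : ∀ i j a b, 0 ≤ bitTable 1 (p i j) (q i) (r j) a b)
    (hfine : ∀ i i' j j' : Fin 2, i ≠ i' → j ≠ j' →
      -1 ≤ p i j + p i' j + p i' j' - p i j' - q i' - r j ∧
        p i j + p i' j + p i' j' - p i j' - q i' - r j ≤ 0) :
    ∃ w : (Fin 2 → Fin 2) × (Fin 2 → Fin 2) → ℝ, (∀ ω, 0 ≤ w ω) ∧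
      ∀ i j a b, ∑ ω : (Fin 2 → Fin 2) × (Fin 2 → Fin 2) with ω.1 i = a ∧ ω.2 j = b, w ω =
        bitTable 1 (p i j) (q i) (r j) a b := by
  have hbounds : ∀ i j, 0 ≤ p i j ∧ p i j ≤ q i ∧ p i j ≤ r j ∧ q i + r j - 1 ≤ p i j :=
    fun i j => bitTable_nonneg_iff.mp (hpqr i j)
  -- `u` is the mass of `{L₁ = ![1, 1]}`: its bounds are those of `exists_law_of_bit_triple` for
  -- both `j`, and comparing bounds coming from different `j` gives Fine's inequalities.
  obtain ⟨u, hu_low, hu_up⟩ := exists_forall_le_and_forall_le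
    (l := ![0, q 0 + q 1 - 1, p 0 0 + p 1 0 - r 0, p 0 1 + p 1 1 - r 1,
      q 0 + q 1 + r 0 - p 0 0 - p 1 0 - 1, q 0 + q 1 + r 1 - p 0 1 - p 1 1 - 1])
    (h := ![q 0, q 1, q 0 + p 1 0 - p 0 0, q 1 + p 0 0 - p 1 0,
      q 0 + p 1 1 - p 0 1, q 1 + p 0 1 - p 1 1]) (by
      obtain ⟨_, _, _, _⟩ := hbounds 0 0
      obtain ⟨_, _, _, _⟩ := hbounds 0 1
      obtain ⟨_, _, _, _⟩ := hbounds 1 0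
      obtain ⟨_, _, _, _⟩ := hbounds 1 1
      have := hfine 0 1 0 1 zero_ne_one zero_ne_one
      have := hfine 1 0 0 1 one_ne_zero zero_ne_one
      have := hfine 0 1 1 0 zero_ne_one one_ne_zero
      have := hfine 1 0 1 0 one_ne_zero one_ne_zero
      intro i k
      fin_cases i <;> fin_cases k <;> simp <;> linarith)
  simp only [Fin.forall_fin_succ, Matrix.cons_val_zero, Matrix.cons_val_succ,
    Matrix.cons_val_fin_one, forall_const] at hu_low hu_up
  obtain ⟨hu₀, hu₁, hu₂, hu₃, hu₄, hu₅⟩ := hu_low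
  obtain ⟨hu₆, hu₇, hu₈, hu₉, hu₁₀, hu₁₁⟩ := hu_up
  have hlaw : ∀ a b, 0 ≤ bitTable 1 u (q 0) (q 1) a b :=
    bitTable_nonneg_iff.mpr ⟨hu₀, hu₆, hu₇, by linarith⟩
  have htriple : ∀ j, ∃ T : (Fin 2 → Fin 2) → Fin 2 → ℝ, (∀ x b, 0 ≤ T x b) ∧
      (∀ x, ∑ b, T x b = bitTable 1 u (q 0) (q 1) (x 0) (x 1)) ∧
      ∀ i a b, ∑ x : Fin 2 → Fin 2 with x i = a, T x b = bitTable 1 (p i j) (q i) (r j) a b := by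
    intro j
    fin_cases j
    · exact exists_law_of_bit_triple (fun i => hpqr i 0) hlaw hu₂ hu₄ hu₈ hu₉
    · exact exists_law_of_bit_triple (fun i => hpqr i 1) hlaw hu₃ hu₅ hu₁₀ hu₁₁
  choose T hT_nonneg hT_sum hT_marginal using htriple
  refine ⟨fun ω => condIndepCoupling (fun x => bitTable 1 u (q 0) (q 1) (x 0) (x 1)) T ω.1 ω.2,
    fun ω => condIndepCoupling_nonneg hT_nonneg (fun x => hlaw _ _) _ _, fun i j a b => ?_⟩
  rw [← univ_product_univ, filter_product (fun x : Fin 2 → Fin 2 => x i = a)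
    (fun f : Fin 2 → Fin 2 => f j = b), sum_product]
  simp only [sum_condIndepCoupling_eq hT_nonneg hT_sum j]
  exact hT_marginal j i a b

lemma sum_ofReal_smul_dirac_apply {Ω : Type*} [Fintype Ω] [MeasurableSpace Ω]
    [MeasurableSingletonClass Ω] {w : Ω → ℝ} (hw : ∀ ω, 0 ≤ w ω) (S : Set Ω)
    [DecidablePred (· ∈ S)] :
    (∑ ω, ENNReal.ofReal (w ω) • Measure.dirac ω) S = ENNReal.ofReal (∑ ω with ω ∈ S, w ω) := by
  rw [Measure.coe_finsetSum, Finset.sum_apply, ENNReal.ofReal_sum_of_nonneg fun ω _ => hw ω,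
    sum_filter]
  refine sum_congr rfl fun ω _ => ?_
  by_cases hω : ω ∈ S <;> simp [Measure.dirac_apply, hω]

theorem exists_isProbabilityMeasure_map_eq_of_weights {Ω Y J : Type*} [Fintype Ω]
    [MeasurableSpace Ω] [MeasurableSingletonClass Ω] [Countable Y] [MeasurableSpace Y]
    [MeasurableSingletonClass Y] [DecidableEq Y] [Nonempty J] {π : J → Ω → Y}
    {μ : J → Measure Y} [∀ j, IsProbabilityMeasure (μ j)] {w : Ω → ℝ} (hw : ∀ ω, 0 ≤ w ω)
    (hwμ : ∀ j y, ∑ ω with π j ω = y, w ω = (μ j).real {y}) :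
    ∃ ξ : Measure Ω, IsProbabilityMeasure ξ ∧ ∀ j, ξ.map (π j) = μ j := by
  classical
  set ξ := ∑ ω, ENNReal.ofReal (w ω) • Measure.dirac ω
  have hmap : ∀ j, ξ.map (π j) = μ j := by
    intro j
    refine Measure.ext_of_singleton fun y => ?_
    rw [Measure.map_apply .of_discrete (measurableSet_singleton y),
      sum_ofReal_smul_dirac_apply hw]
    simp only [Set.mem_preimage, Set.mem_singleton_iff, hwμ]
    exact ofReal_measureReal
  obtain ⟨j⟩ := ‹Nonempty J›
  refine ⟨ξ, ⟨?_⟩, hmap⟩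
  rw [← Set.preimage_univ (f := π j), ← Measure.map_apply .of_discrete .univ, hmap, measure_univ]

/-- Fine's inequalities: for two binary factors and two binary outputs satisfying
marginal selectivity, a JDC-measure exists iff for all `j₁ ≠ j₁'` and `j₂ ≠ j₂'`,
`−1 ≤ p j₁ j₂ + p j₁' j₂ + p j₁' j₂' − p j₁ j₂' − q₁ j₁' − q₂ j₂ ≤ 0`. -/
theorem fine_inequalities
    (μ : Fin 2 × Fin 2 → Measure (Fin 2 × Fin 2))
    (hμ : ∀ j, IsProbabilityMeasure (μ j))
    (hMS1 : ∀ j₁ j₂ j₂' : Fin 2,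
      Measure.map Prod.fst (μ (j₁, j₂)) = Measure.map Prod.fst (μ (j₁, j₂')))
    (hMS2 : ∀ j₁ j₁' j₂ : Fin 2,
      Measure.map Prod.snd (μ (j₁, j₂)) = Measure.map Prod.snd (μ (j₁', j₂))) :
    (∃ ξ : Measure ((Fin 2 → Fin 2) × (Fin 2 → Fin 2)),
      IsProbabilityMeasure ξ ∧
      ∀ j₁ j₂ : Fin 2,
        Measure.map (fun Lp : (Fin 2 → Fin 2) × (Fin 2 → Fin 2) =>
          (Lp.1 j₁, Lp.2 j₂)) ξ = μ (j₁, j₂)) ↔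
    (∀ j₁ j₁' j₂ j₂' : Fin 2, j₁ ≠ j₁' → j₂ ≠ j₂' →
      -1 ≤ (μ (j₁, j₂) {((1 : Fin 2), (1 : Fin 2))}).toReal
          + (μ (j₁', j₂) {((1 : Fin 2), (1 : Fin 2))}).toReal
          + (μ (j₁', j₂') {((1 : Fin 2), (1 : Fin 2))}).toReal
          - (μ (j₁, j₂') {((1 : Fin 2), (1 : Fin 2))}).toReal
          - (μ (j₁', j₂) {a : Fin 2 × Fin 2 | a.1 = 1}).toReal
          - (μ (j₁, j₂) {a : Fin 2 × Fin 2 | a.2 = 1}).toReal ∧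
      (μ (j₁, j₂) {((1 : Fin 2), (1 : Fin 2))}).toReal
          + (μ (j₁', j₂) {((1 : Fin 2), (1 : Fin 2))}).toReal
          + (μ (j₁', j₂') {((1 : Fin 2), (1 : Fin 2))}).toReal
          - (μ (j₁, j₂') {((1 : Fin 2), (1 : Fin 2))}).toReal
          - (μ (j₁', j₂) {a : Fin 2 × Fin 2 | a.1 = 1}).toReal
          - (μ (j₁, j₂) {a : Fin 2 × Fin 2 | a.2 = 1}).toReal ≤ 0) := by
  simp only [← measureReal_def]
  constructor
  · rintro ⟨ξ, hξ, hmap⟩ j₁ j₁' j₂ j₂' - -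
    simp only [← hmap, map_measureReal_apply .of_discrete .of_discrete, Set.preimage,
      Set.mem_singleton_iff, Prod.mk.injEq, Set.mem_ofPred_eq, Set.ofPred_and]
    exact measureReal_fine_bounds ξ .of_discrete .of_discrete .of_discrete .of_discrete
  · intro hfine
    set p : Fin 2 → Fin 2 → ℝ := fun i j => (μ (i, j)).real {(1, 1)}
    set q : Fin 2 → ℝ := fun i => (μ (i, 0)).real {x | x.1 = 1}
    set r : Fin 2 → ℝ := fun j => (μ (0, j)).real {x | x.2 = 1}
    have hq : ∀ i j, (μ (i, j)).real {x | x.1 = 1} = q i := fun i j => by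
      change (μ (i, j)).real (Prod.fst ⁻¹' {1}) = (μ (i, 0)).real (Prod.fst ⁻¹' {1})
      rw [← map_measureReal_apply measurable_fst .of_discrete,
        ← map_measureReal_apply measurable_fst .of_discrete, hMS1 i j 0]
    have hr : ∀ i j, (μ (i, j)).real {x | x.2 = 1} = r j := fun i j => by
      change (μ (i, j)).real (Prod.snd ⁻¹' {1}) = (μ (0, j)).real (Prod.snd ⁻¹' {1})
      rw [← map_measureReal_apply measurable_snd .of_discrete,
        ← map_measureReal_apply measurable_snd .of_discrete, hMS2 i 0 j]
    have htable : ∀ i j a b, (μ (i, j)).real {(a, b)} = bitTable 1 (p i j) (q i) (r j) a b :=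
      fun i j a b => by rw [measureReal_singleton_eq_bitTable, hq, hr]
    obtain ⟨w, hw, hwμ⟩ := exists_weights_of_fine p q r
      (fun i j a b => htable i j a b ▸ measureReal_nonneg)
      (fun i i' j j' hi hj => by simpa only [hq, hr] using hfine i i' j j' hi hj)
    obtain ⟨ξ, hξ, hmap⟩ := exists_isProbabilityMeasure_map_eq_of_weights
      (π := fun j ω => (ω.1 j.1, ω.2 j.2)) (μ := μ) hw fun ⟨i, j⟩ ⟨a, b⟩ => by
        simpa only [Prod.mk.injEq, htable] using hwμ i j a b
    exact ⟨ξ, hξ, fun j₁ j₂ => hmap (j₁, j₂)⟩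
end

section
/- (Grouping of factor points preserves selective influences.) Fix an index i₀ ∈ Fin n, two distinct points x, y ∈ Fin (k i₀), and a real number π with 0 < π < 1. Suppose T is such that for every treatment φ, the treatment obtained from φ by setting its i₀-th coordinate to x belongs to T if and only if the treatment obtained by setting it to y belongs to T. Let T′ := {φ ∈ T : φ i₀ ≠ y}, and define for φ ∈ T′: ν φ := π • μ φ + (1 − π) • μ (Function.update φ i₀ y) if φ i₀ = x, and ν φ := μ φ otherwise. If the family (μ φ)_{φ ∈ T} has a JDC-measure, then the coarsened family (ν φ)_{φ ∈ T′} has a JDC-measure. -/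
/-!
Let `ξ` be a JDC-measure and let `L ↦ L'` copy the value `L i₀ y` into `L i₀ x`. Under the
mixture `π ξ + (1 - π) (L ↦ L')_* ξ`, a treatment with `φ i₀ = x` sees `μ φ` from the first
component and `μ (update φ i₀ y)` from the second, while for `φ i₀ ∉ {x, y}` the copy does not
change what `φ` reads, so both components give `μ φ`.
-/

open MeasureTheory

section CopyValue

variable {ι : Type*} [DecidableEq ι] {α β : ι → Type*} [∀ i, DecidableEq (α i)]

def copyValue (i₀ : ι) (x y : α i₀) (L : ∀ i, α i → β i) : ∀ i, α i → β i :=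
  Function.update L i₀ (Function.update (L i₀) x (L i₀ y))

theorem eval_comp_copyValue_of_eq {i₀ : ι} {x : α i₀} (φ : ∀ i, α i) (y : α i₀)
    (hφ : φ i₀ = x) :
    (fun L : ∀ i, α i → β i => fun i => L i (φ i)) ∘ copyValue i₀ x y =
      fun L i => L i (Function.update φ i₀ y i) := by
  funext L i
  by_cases hi : i = i₀
  · subst hi
    simp [copyValue, hφ]
  · simp [copyValue, hi]

theorem eval_comp_copyValue_of_ne {i₀ : ι} {x : α i₀} (φ : ∀ i, α i) (y : α i₀)
    (hφ : φ i₀ ≠ x) :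
    (fun L : ∀ i, α i → β i => fun i => L i (φ i)) ∘ copyValue i₀ x y =
      fun L i => L i (φ i) := by
  funext L i
  by_cases hi : i = i₀
  · subst hi
    simp [copyValue, hφ]
  · simp [copyValue, hi]

end CopyValue

section Mixture

variable {Ω Ω' : Type*} [MeasurableSpace Ω] [MeasurableSpace Ω']

theorem isProbabilityMeasure_smul_add_smul {a b : ENNReal} (hab : a + b = 1)
    (ξ ξ' : Measure Ω) [IsProbabilityMeasure ξ] [IsProbabilityMeasure ξ'] :
    IsProbabilityMeasure (a • ξ + b • ξ') :=
  ⟨by simp [hab]⟩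

theorem map_smul_add_smul_map {f : Ω → Ω} {g : Ω → Ω'} (hf : Measurable f) (hg : Measurable g)
    (a b : ENNReal) (ξ : Measure Ω) :
    (a • ξ + b • ξ.map f).map g = a • ξ.map g + b • ξ.map (g ∘ f) := by
  rw [Measure.map_add _ _ hg, Measure.map_smul, Measure.map_smul, Measure.map_map hg hf]

end Mixture

theorem jdc_of_grouping_factor_points_general
    (n : ℕ) (k m : Fin n → ℕ)
    (T : Set (∀ i, Fin (k i)))
    (μ : (∀ i, Fin (k i)) → Measure (∀ i, Fin (m i)))
    (i₀ : Fin n) (x y : Fin (k i₀))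
    (π : ℝ) (hπ0 : 0 < π) (hπ1 : π < 1)
    (hTxy : ∀ φ : ∀ i, Fin (k i),
      Function.update φ i₀ x ∈ T ↔ Function.update φ i₀ y ∈ T)
    (T' : Set (∀ i, Fin (k i))) (hT' : T' = {φ ∈ T | φ i₀ ≠ y})
    (ν : (∀ i, Fin (k i)) → Measure (∀ i, Fin (m i)))
    (hν : ∀ φ ∈ T', ν φ =
      if φ i₀ = x then
        ENNReal.ofReal π • μ φ + ENNReal.ofReal (1 - π) • μ (Function.update φ i₀ y)
      else μ φ)
    (hJDC : ∃ ξ : Measure (∀ i, Fin (k i) → Fin (m i)),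
      IsProbabilityMeasure ξ ∧
      ∀ φ ∈ T, Measure.map (fun L => fun i => L i (φ i)) ξ = μ φ) :
    ∃ ξ' : Measure (∀ i, Fin (k i) → Fin (m i)),
      IsProbabilityMeasure ξ' ∧
      ∀ φ ∈ T', Measure.map (fun L => fun i => L i (φ i)) ξ' = ν φ := by
  obtain ⟨ξ, hξ, hmap⟩ := hJDC
  subst hT'
  have hsum : ENNReal.ofReal π + ENNReal.ofReal (1 - π) = 1 := by
    rw [← ENNReal.ofReal_add hπ0.le (by linarith)]
    norm_num
  have hcopy :
      Measurable (copyValue (α := fun i => Fin (k i)) (β := fun i => Fin (m i)) i₀ x y) :=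
    measurable_of_countable _
  have hξcopy := Measure.isProbabilityMeasure_map hcopy.aemeasurable (μ := ξ)
  refine ⟨ENNReal.ofReal π • ξ + ENNReal.ofReal (1 - π) • ξ.map (copyValue i₀ x y),
    isProbabilityMeasure_smul_add_smul hsum _ _, ?_⟩
  rintro φ ⟨hφT, hφy⟩
  rw [hν φ ⟨hφT, hφy⟩, map_smul_add_smul_map hcopy (measurable_of_countable _), hmap φ hφT]
  split_ifs with hx
  · have hφyT : Function.update φ i₀ y ∈ T :=
      (hTxy φ).1 (by rwa [← hx, Function.update_eq_self])
    rw [eval_comp_copyValue_of_eq φ y hx, hmap _ hφyT]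
  · rw [eval_comp_copyValue_of_ne φ y hx, hmap φ hφT, ← add_smul, hsum, one_smul]

/-- Grouping of factor points preserves selective influences: mixing two points `x ≠ y`
of the `i₀`-th factor with weights `π` and `1 − π` yields a coarsened family which still
admits a JDC-measure whenever the original family does. -/
theorem jdc_of_grouping_factor_points
    (n : ℕ) (hn : 1 ≤ n) (k m : Fin n → ℕ)
    (hk : ∀ i, 1 ≤ k i) (hm : ∀ i, 1 ≤ m i)
    (T : Set (∀ i, Fin (k i))) (hT : T.Nonempty)
    (μ : (∀ i, Fin (k i)) → Measure (∀ i, Fin (m i)))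
    (hμ : ∀ φ ∈ T, IsProbabilityMeasure (μ φ))
    (i₀ : Fin n) (x y : Fin (k i₀)) (hxy : x ≠ y)
    (π : ℝ) (hπ0 : 0 < π) (hπ1 : π < 1)
    (hTxy : ∀ φ : ∀ i, Fin (k i),
      Function.update φ i₀ x ∈ T ↔ Function.update φ i₀ y ∈ T)
    (T' : Set (∀ i, Fin (k i))) (hT' : T' = {φ ∈ T | φ i₀ ≠ y})
    (ν : (∀ i, Fin (k i)) → Measure (∀ i, Fin (m i)))
    (hν : ∀ φ ∈ T', ν φ =
      if φ i₀ = x then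
        ENNReal.ofReal π • μ φ + ENNReal.ofReal (1 - π) • μ (Function.update φ i₀ y)
      else μ φ)
    (hJDC : ∃ ξ : Measure (∀ i, Fin (k i) → Fin (m i)),
      IsProbabilityMeasure ξ ∧
      ∀ φ ∈ T, Measure.map (fun L => fun i => L i (φ i)) ξ = μ φ) :
    ∃ ξ' : Measure (∀ i, Fin (k i) → Fin (m i)),
      IsProbabilityMeasure ξ' ∧
      ∀ φ ∈ T', Measure.map (fun L => fun i => L i (φ i)) ξ' = ν φ :=
  jdc_of_grouping_factor_points_general n k m T μ i₀ x y π hπ0 hπ1 hTxy T' hT' ν hν hJDC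
end
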